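/- arXiv:1603.00522 — 7 statements merged into one kernel-verified Lean document; each statement's English description precedes it below -/
import Mathlib

section
/- Let h : D → ℝ be a separable function h(x) = Σ_e h_e(x(e)) where each h_e is differentiable and strictly convex, and let f be a monotone normalized submodular function. A point x* ∈ B(f) minimizes h over the base polytope B(f) if and only if, letting F₁,...,F_k be the partition of E into level sets of ∇h(x*) with values c₁ < c₂ < ... < c_k, the point x* satisfies x*(F₁ ∪ ... ∪ F_i) = f(F₁ ∪ ... ∪ F_i) for all 1 ≤ i ≤ k. -/
/-!
Tight sets of a point `x ∈ B(f)` are closed under `∪` and `∩` by submodularity. If a sublevel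
set `A` of `w = ∇h(x*)` is not tight, the union over `e ∈ A` of the smallest tight sets
containing `e` is tight, so by monotonicity it contains some `e' ∉ A` with `x*(e') > 0` that no
tight set separates from `e`. Moving a little mass from `e'` to `e` then stays in `B(f)` and,
as `w e < w e'`, decreases `h`. Conversely, convexity gives `h(z) - h(x*) ≥ ⟨w, z - x*⟩`, which is
nonnegative by Abel summation: `z - x*` has total `0` and a nonpositive sum on every sublevel set
of `w`, these being tight for `x*`. The prefix unions `F₁ ∪ ⋯ ∪ Fᵢ` are exactly those sublevel
sets.
-/

open Finset

/-- Membership in the base polytope `B(f)` of a polymatroid on ground set `α`. -/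
def memBasePoly {α : Type*} [Fintype α] (f : Finset α → ℝ) (x : α → ℝ) : Prop :=
  (∀ e, 0 ≤ x e) ∧ (∀ U : Finset α, ∑ e ∈ U, x e ≤ f U) ∧ (∑ e, x e = f univ)

open Filter Topology

lemma ConvexOn.add_deriv_mul_sub_le {g : ℝ → ℝ} (hg : ConvexOn ℝ Set.univ g) {x : ℝ}
    (hd : DifferentiableAt ℝ g x) (y : ℝ) : g x + deriv g x * (y - x) ≤ g y := by
  rcases lt_trichotomy x y with hxy | rfl | hxy
  · have := hg.deriv_le_slope (Set.mem_univ x) (Set.mem_univ y) hxy hd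
    rw [slope_def_field, le_div_iff₀ (by linarith)] at this
    linarith
  · simp
  · have := hg.slope_le_deriv (Set.mem_univ y) (Set.mem_univ x) hxy hd
    rw [slope_def_field, div_le_iff₀ (by linarith)] at this
    linarith

lemma HasDerivAt.eventually_nhdsGT_lt_of_neg {g : ℝ → ℝ} {m a : ℝ} (hg : HasDerivAt g m a)
    (hm : m < 0) : ∀ᶠ t in 𝓝[>] a, g t < g a := by
  filter_upwards [hg.hasDerivWithinAt.limsup_slope_le' (lt_irrefl a) hm, self_mem_nhdsWithin]
    with t hslope (hat : a < t)
  exact (slope_neg_iff_of_le hat.le).1 hslope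

/-- Abel summation in disguise: peel off the level of a maximiser of `w`. -/
lemma sum_sub_mul_nonpos_of_sublevel_sum_nonpos {ι : Type*} [DecidableEq ι] (w d : ι → ℝ)
    (s : Finset ι) (M : ℝ) (hM : ∀ a ∈ s, w a ≤ M)
    (hsublevel : ∀ a ∈ s, w a < M → ∑ e ∈ s with w e ≤ w a, d e ≤ 0) :
    ∑ e ∈ s, (M - w e) * d e ≤ 0 := by
  induction s using Finset.induction_on_max_value w generalizing M with
  | empty => simp
  | insert a s ha hmax ih =>
    have hsplit : ∑ e ∈ insert a s, (M - w e) * d e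
        = (M - w a) * ∑ e ∈ insert a s, d e + ∑ e ∈ s, (w a - w e) * d e := by
      rw [sum_insert ha, sum_insert ha, mul_add, mul_sum, add_assoc, ← sum_add_distrib]
      exact congrArg _ (sum_congr rfl fun e _ => by ring)
    have htop : (M - w a) * ∑ e ∈ insert a s, d e ≤ 0 := by
      rcases (hM a (mem_insert_self a s)).lt_or_eq with hlt | heq
      · have := hsublevel a (mem_insert_self a s) hlt
        rw [filter_true_of_mem fun e he => ?_] at this
        · exact mul_nonpos_of_nonneg_of_nonpos (sub_nonneg.2 hlt.le) this
        · rcases mem_insert.1 he with rfl | he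
          exacts [le_rfl, hmax e he]
      · simp [heq]
    have hrest : ∑ e ∈ s, (w a - w e) * d e ≤ 0 := by
      refine ih (w a) hmax fun b hb hlt => ?_
      have := hsublevel b (mem_insert_of_mem hb) (hlt.trans_le (hM a (mem_insert_self a s)))
      rwa [filter_insert, if_neg hlt.not_ge] at this
    linarith

lemma sum_mul_nonneg_of_sublevel_sum_nonpos {ι : Type*} [Fintype ι] [DecidableEq ι]
    (w d : ι → ℝ) (htotal : ∑ e, d e = 0) (hsublevel : ∀ a, ∑ e with w e ≤ w a, d e ≤ 0) :
    0 ≤ ∑ e, w e * d e := by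
  obtain ⟨M, hM⟩ := (Set.finite_range w).bddAbove
  have := sum_sub_mul_nonpos_of_sublevel_sum_nonpos w d univ M
    (fun a _ => hM (Set.mem_range_self a)) fun a _ _ => hsublevel a
  simp only [sub_mul, sum_sub_distrib, ← mul_sum, htotal, mul_zero] at this
  linarith

def IsTight {α : Type*} (f : Finset α → ℝ) (x : α → ℝ) (S : Finset α) : Prop :=
  ∑ e ∈ S, x e = f S

section Tight

variable {α : Type*} [DecidableEq α] {f : Finset α → ℝ} {x : α → ℝ}

lemma IsTight.union_inter (hsub : ∀ A B : Finset α, f (A ∪ B) + f (A ∩ B) ≤ f A + f B)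
    (hle : ∀ U : Finset α, ∑ e ∈ U, x e ≤ f U) {S T : Finset α} (hS : IsTight f x S)
    (hT : IsTight f x T) : IsTight f x (S ∪ T) ∧ IsTight f x (S ∩ T) := by
  unfold IsTight at *
  constructor <;>
    linarith [sum_union_inter (s₁ := S) (s₂ := T) (f := x), hle (S ∪ T), hle (S ∩ T), hsub S T]

lemma IsTight.finset_sup {ι : Type*}
    (hsub : ∀ A B : Finset α, f (A ∪ B) + f (A ∩ B) ≤ f A + f B)
    (hle : ∀ U : Finset α, ∑ e ∈ U, x e ≤ f U) (hnorm : f ∅ = 0) {s : Finset ι}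
    {T : ι → Finset α} (hT : ∀ i ∈ s, IsTight f x (T i)) : IsTight f x (s.sup T) :=
  sup_induction (by simp [IsTight, hnorm]) (fun _ hS _ hT => (hS.union_inter hsub hle hT).1) hT

lemma IsTight.finset_inf [Fintype α] {ι : Type*}
    (hsub : ∀ A B : Finset α, f (A ∪ B) + f (A ∩ B) ≤ f A + f B)
    (hle : ∀ U : Finset α, ∑ e ∈ U, x e ≤ f U) (htot : ∑ e, x e = f univ) {s : Finset ι}
    {T : ι → Finset α} (hT : ∀ i ∈ s, IsTight f x (T i)) : IsTight f x (s.inf T) :=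
  inf_induction htot (fun _ hS _ hT => (hS.union_inter hsub hle hT).2) hT

variable [Fintype α]

lemma exists_exchange_of_not_isTight
    (hsub : ∀ A B : Finset α, f (A ∪ B) + f (A ∩ B) ≤ f A + f B)
    (hmono : ∀ ⦃A B : Finset α⦄, A ⊆ B → f A ≤ f B) (hnorm : f ∅ = 0)
    (hx : memBasePoly f x) {A : Finset α} (hA : ¬ IsTight f x A) :
    ∃ e ∈ A, ∃ e' ∉ A, 0 < x e' ∧ ∀ U, e ∈ U → e' ∉ U → ∑ a ∈ U, x a < f U := by
  classical
  obtain ⟨hx0, hle, htot⟩ := hx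
  by_contra! hcon
  let T : α → Finset α := fun e =>
    ({U : Finset α | IsTight f x U ∧ e ∈ U} : Finset (Finset α)).inf id
  have hT : ∀ e, IsTight f x (T e) := fun e =>
    IsTight.finset_inf hsub hle htot fun U hU => (mem_filter.1 hU).2.1
  have hmemT : ∀ e, e ∈ T e := fun e => mem_inf.2 fun U hU => (mem_filter.1 hU).2.2
  have hTle : ∀ e U, IsTight f x U → e ∈ U → T e ⊆ U := fun e U hU heU =>
    inf_le (f := id) (mem_filter.2 ⟨mem_univ U, hU, heU⟩)
  have hW : IsTight f x (A.sup T) := IsTight.finset_sup hsub hle hnorm fun e _ => hT e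
  have hAW : A ⊆ A.sup T := fun e he => mem_sup.2 ⟨e, he, hmemT e⟩
  have hzero : ∀ a ∈ A.sup T, a ∉ A → x a = 0 := by
    intro a haW haA
    obtain ⟨e, he, haT⟩ := mem_sup.1 haW
    by_contra hne
    obtain ⟨U, heU, haU, hU⟩ := hcon e he a haA ((hx0 a).lt_of_ne' hne)
    exact haU (hTle e U (le_antisymm (hle U) hU) heU haT)
  have hsumW : ∑ a ∈ A, x a = ∑ a ∈ A.sup T, x a := sum_subset hAW hzero
  unfold IsTight at hW
  exact hA (le_antisymm (hle A) (by linarith [hmono hAW]))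

end Tight

section Exchange

variable {α : Type*} [DecidableEq α] {f : Finset α → ℝ} {x : α → ℝ} {e e' : α}

lemma sum_add_single_sub_single (U : Finset α) (t : ℝ) :
    ∑ a ∈ U, (x + Pi.single e t - Pi.single e' t : α → ℝ) a
      = ∑ a ∈ U, x a + (if e ∈ U then t else 0) - (if e' ∈ U then t else 0) := by
  simp only [Pi.sub_apply, Pi.add_apply, sum_sub_distrib, sum_add_distrib, sum_pi_single']

variable [Fintype α]

lemma eventually_memBasePoly_add_single_sub_single (hx : memBasePoly f x) (he' : 0 < x e')
    (hslack : ∀ U, e ∈ U → e' ∉ U → ∑ a ∈ U, x a < f U) :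
    ∀ᶠ t in 𝓝[>] 0, memBasePoly f (x + Pi.single e t - Pi.single e' t) := by
  obtain ⟨hx0, hle, htot⟩ := hx
  have hU : ∀ᶠ t in 𝓝 (0 : ℝ), ∀ U : Finset α, e ∈ U → e' ∉ U → ∑ a ∈ U, x a + t ≤ f U := by
    refine eventually_all.2 fun U => ?_
    by_cases hU : e ∈ U ∧ e' ∉ U
    · filter_upwards [eventually_le_nhds (sub_pos.2 (hslack U hU.1 hU.2))] with t ht _ _
      linarith
    · exact Eventually.of_forall fun t h1 h2 => absurd ⟨h1, h2⟩ hU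
  filter_upwards [nhdsWithin_le_nhds hU, nhdsWithin_le_nhds (eventually_le_nhds he'),
    self_mem_nhdsWithin] with t hU ht' (ht : 0 < t)
  refine ⟨fun a => ?_, fun U => ?_, ?_⟩
  · simp only [Pi.sub_apply, Pi.add_apply, Pi.single_apply]
    split_ifs <;> subst_vars <;> linarith [hx0 a]
  · rw [sum_add_single_sub_single]
    split_ifs with h1 h2 h2
    · linarith [hle U]
    · linarith [hU U h1 h2]
    all_goals linarith [hle U]
  · rw [sum_add_single_sub_single]
    simp [htot]

lemma sum_comp_add_single_sub_single (h : α → ℝ → ℝ) (hne : e ≠ e') (t : ℝ) :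
    ∑ a, h a ((x + Pi.single e t - Pi.single e' t : α → ℝ) a) - ∑ a, h a (x a)
      = (h e (x e + t) - h e (x e)) + (h e' (x e' - t) - h e' (x e')) := by
  rw [← sum_sub_distrib, Fintype.sum_eq_add e e' hne]
  · simp [hne, hne.symm, sub_eq_add_neg]
  · rintro a ⟨hae, hae'⟩
    simp [hae, hae']

lemma eventually_sum_comp_add_single_sub_single_lt (h : α → ℝ → ℝ) (hne : e ≠ e')
    (hde : DifferentiableAt ℝ (h e) (x e)) (hde' : DifferentiableAt ℝ (h e') (x e'))
    (hlt : deriv (h e) (x e) < deriv (h e') (x e')) :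
    ∀ᶠ t in 𝓝[>] 0,
      ∑ a, h a ((x + Pi.single e t - Pi.single e' t : α → ℝ) a) < ∑ a, h a (x a) := by
  have hg : HasDerivAt (fun t => h e (x e + t) + h e' (x e' - t))
      (deriv (h e) (x e) + -deriv (h e') (x e')) 0 :=
    (HasDerivAt.comp_const_add _ _ (by simpa using hde.hasDerivAt)).add
      (HasDerivAt.comp_const_sub _ _ (by simpa using hde'.hasDerivAt))
  filter_upwards [hg.eventually_nhdsGT_lt_of_neg (by linarith)] with t ht
  have := sum_comp_add_single_sub_single h hne t (x := x)
  simp only [add_zero, sub_zero] at ht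
  linarith

end Exchange

noncomputable def gradSublevel {α : Type*} [Fintype α] (h : α → ℝ → ℝ) (x : α → ℝ) (t : ℝ) :
    Finset α :=
  {e | deriv (h e) (x e) ≤ t}

section Gradient

variable {α : Type*} [Fintype α] [DecidableEq α] {f : Finset α → ℝ} {h : α → ℝ → ℝ}
  {x : α → ℝ}

theorem isTight_gradSublevel_of_forall_sum_le
    (hsub : ∀ A B : Finset α, f (A ∪ B) + f (A ∩ B) ≤ f A + f B)
    (hmono : ∀ ⦃A B : Finset α⦄, A ⊆ B → f A ≤ f B) (hnorm : f ∅ = 0)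
    (hdiff : ∀ e, DifferentiableAt ℝ (h e) (x e)) (hx : memBasePoly f x)
    (hmin : ∀ z, memBasePoly f z → ∑ e, h e (x e) ≤ ∑ e, h e (z e)) (t : ℝ) :
    IsTight f x (gradSublevel h x t) := by
  by_contra hA
  obtain ⟨e, he, e', he', hpos, hslack⟩ := exists_exchange_of_not_isTight hsub hmono hnorm hx hA
  have hne : e ≠ e' := ne_of_mem_of_not_mem he he'
  simp only [gradSublevel, mem_filter, mem_univ, true_and, not_le] at he he'
  obtain ⟨ε, hmem, hlt⟩ := ((eventually_memBasePoly_add_single_sub_single hx hpos hslack).and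
    (eventually_sum_comp_add_single_sub_single_lt h hne (hdiff e) (hdiff e')
      (he.trans_lt he'))).exists
  exact (hmin _ hmem).not_gt hlt

theorem sum_le_sum_of_isTight_gradSublevel (hconv : ∀ e, ConvexOn ℝ Set.univ (h e))
    (hdiff : ∀ e, DifferentiableAt ℝ (h e) (x e)) (htot : ∑ e, x e = f univ)
    (htight : ∀ a, IsTight f x (gradSublevel h x (deriv (h a) (x a))))
    {z : α → ℝ} (hz : memBasePoly f z) : ∑ e, h e (x e) ≤ ∑ e, h e (z e) := by
  obtain ⟨-, hzle, hztot⟩ := hz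
  have htangent :
      ∑ e, h e (x e) + ∑ e, deriv (h e) (x e) * (z e - x e) ≤ ∑ e, h e (z e) := by
    rw [← sum_add_distrib]
    exact sum_le_sum fun e _ => (hconv e).add_deriv_mul_sub_le (hdiff e) _
  have hlin : 0 ≤ ∑ e, deriv (h e) (x e) * (z e - x e) := by
    refine sum_mul_nonneg_of_sublevel_sum_nonpos _ _
      (by rw [sum_sub_distrib, hztot, htot, sub_self]) fun a => ?_
    have hxa := htight a
    have hza := hzle (gradSublevel h x (deriv (h a) (x a)))
    unfold IsTight gradSublevel at *
    rw [sum_sub_distrib]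
    linarith
  linarith

lemma biUnion_filter_le_eq_gradSublevel {k : ℕ} {c : Fin k → ℝ} (hc : StrictMono c)
    {F : Fin k → Finset α} (hcover : ∀ e, ∃ i, e ∈ F i)
    (hgrad : ∀ i, ∀ e ∈ F i, deriv (h e) (x e) = c i) (i : Fin k) :
    (univ.filter (fun j : Fin k => j ≤ i)).biUnion F = gradSublevel h x (c i) := by
  ext e
  obtain ⟨j, hj⟩ := hcover e
  simp only [mem_biUnion, mem_filter, mem_univ, true_and, gradSublevel]
  constructor
  · rintro ⟨j', hj'i, hj'⟩
    rw [hgrad j' e hj']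
    exact hc.monotone hj'i
  · intro hle
    rw [hgrad j e hj] at hle
    exact ⟨j, hc.le_iff_le.1 hle, hj⟩

end Gradient

/-- `x*` minimizes the separable strictly convex differentiable function
`h(x) = ∑ₑ hₑ(xₑ)` over the base polytope `B(f)` iff `x*` is tight on every prefix union
of level sets of the gradient `∇h(x*)` (levels in increasing order). -/
theorem separable_convex_min_iff_prefix_tight {α : Type*} [Fintype α] [DecidableEq α]
    (f : Finset α → ℝ)
    (hsub : ∀ A B : Finset α, f (A ∪ B) + f (A ∩ B) ≤ f A + f B)
    (hmono : ∀ ⦃A B : Finset α⦄, A ⊆ B → f A ≤ f B)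
    (hnorm : f ∅ = 0)
    (h : α → ℝ → ℝ)
    (hdiff : ∀ e, Differentiable ℝ (h e))
    (hconv : ∀ e, StrictConvexOn ℝ Set.univ (h e))
    (xstar : α → ℝ) (hxstar : memBasePoly f xstar)
    (k : ℕ) (c : Fin k → ℝ) (hc : StrictMono c)
    (F : Fin k → Finset α)
    (hpart : ∀ e : α, ∃! i : Fin k, e ∈ F i)
    (hgrad : ∀ i : Fin k, ∀ e ∈ F i, deriv (h e) (xstar e) = c i) :
    (∀ z : α → ℝ, memBasePoly f z → ∑ e, h e (xstar e) ≤ ∑ e, h e (z e)) ↔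
    (∀ i : Fin k,
      ∑ e ∈ (univ.filter (fun j : Fin k => j ≤ i)).biUnion F, xstar e
        = f ((univ.filter (fun j : Fin k => j ≤ i)).biUnion F)) := by
  have hdiff' : ∀ e, DifferentiableAt ℝ (h e) (xstar e) := fun e => hdiff e _
  simp only [biUnion_filter_le_eq_gradSublevel hc (fun e => (hpart e).exists) hgrad]
  constructor
  · exact fun hmin i =>
      isTight_gradSublevel_of_forall_sum_le hsub hmono hnorm hdiff' hxstar hmin (c i)
  · intro htight z hz
    refine sum_le_sum_of_isTight_gradSublevel (fun e => (hconv e).convexOn) hdiff' hxstar.2.2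
      (fun a => ?_) hz
    obtain ⟨i, hi⟩ := (hpart a).exists
    rw [hgrad i a hi]
    exact htight i
end

section
/- Let f be a monotone normalized submodular function on E. For any weight vector w ∈ ℝ^E with level sets F₁,...,F_k (w(e) = c_i on F_i, c₁ < ... < c_k), a point z ∈ B(f) minimizes the linear function w^T z over B(f) if and only if z(F₁ ∪ ... ∪ F_i) = f(F₁ ∪ ... ∪ F_i) for all 1 ≤ i ≤ k. -/
/-!
Abel summation along the level sets of `w` writes `∑ w z` as `c_k z(E) - ∑ᵢ (c_{i+1} - c_i) z(Pᵢ)`,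
where `Pᵢ = F₁ ∪ ⋯ ∪ Fᵢ` and every `c_{i+1} - c_i` is positive. On `B(f)` we have `z(Pᵢ) ≤ f(Pᵢ)`
and `z(E) = f(E)`, so a point tight on all prefixes is a minimizer. Conversely, Edmonds' greedy
vector for a linear order of `E` refining the levels of `w` lies in `B(f)` and is tight on every
prefix; a point of `B(f)` that is slack on some `Pᵢ` with `i < k` is then strictly beaten by it.
-/

open Finset

section Greedy

variable {α β : Type*} [LinearOrder β] {f : Finset α → ℝ} {r : α → β}

def greedyIncrement (f : Finset α → ℝ) (r : α → β) (U : Finset α) (e : α) : ℝ :=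
  f {a ∈ U | r a ≤ r e} - f {a ∈ U | r a < r e}

theorem sum_greedyIncrement [DecidableEq α] (hnorm : f ∅ = 0) (hr : Function.Injective r)
    (U : Finset α) : ∑ e ∈ U, greedyIncrement f r U e = f U := by
  induction U using Finset.induction_on_max_value r with
  | empty => simp [hnorm]
  | insert a s ha hmax ih =>
    have hlower : ∀ e ∈ s, greedyIncrement f r (insert a s) e = greedyIncrement f r s e := by
      intro e he
      have hae : ¬ r a ≤ r e := fun h => ha (hr (le_antisymm h (hmax e he)) ▸ he)
      have hae' : ¬ r a < r e := fun h => hae h.le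
      simp only [greedyIncrement, filter_insert, hae, hae', if_false]
    have htop : greedyIncrement f r (insert a s) a = f (insert a s) - f s := by
      have hle : {x ∈ insert a s | r x ≤ r a} = insert a s := filter_true_of_mem <| by
        simpa using hmax
      have hlt : {x ∈ insert a s | r x < r a} = s := by
        ext x
        simp only [mem_filter, mem_insert]
        constructor
        · rintro ⟨rfl | hx, hlt⟩
          · exact absurd hlt (lt_irrefl _)
          · exact hx
        · intro hx
          exact ⟨Or.inr hx, (hmax x hx).lt_of_ne fun h => ha (hr h ▸ hx)⟩
      rw [greedyIncrement, hle, hlt]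
    rw [sum_insert ha, sum_congr rfl hlower, ih, htop]
    ring

theorem greedyIncrement_antitone [DecidableEq α]
    (hsub : ∀ A B : Finset α, f (A ∪ B) + f (A ∩ B) ≤ f A + f B) (hr : Function.Injective r)
    {U V : Finset α} (hUV : U ⊆ V) {e : α} (he : e ∈ U) :
    greedyIncrement f r V e ≤ greedyIncrement f r U e := by
  have hunion : {a ∈ V | r a < r e} ∪ {a ∈ U | r a ≤ r e} = {a ∈ V | r a ≤ r e} := by
    ext a
    simp only [mem_union, mem_filter]
    constructor
    · rintro (⟨haV, hlt⟩ | ⟨haU, hle⟩)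
      · exact ⟨haV, hlt.le⟩
      · exact ⟨hUV haU, hle⟩
    · rintro ⟨haV, hle⟩
      rcases hle.lt_or_eq with hlt | heq
      · exact Or.inl ⟨haV, hlt⟩
      · exact Or.inr ⟨hr heq ▸ he, hle⟩
  have hinter : {a ∈ V | r a < r e} ∩ {a ∈ U | r a ≤ r e} = {a ∈ U | r a < r e} := by
    ext a
    simp only [mem_inter, mem_filter]
    exact ⟨fun ⟨⟨_, hlt⟩, haU, _⟩ => ⟨haU, hlt⟩, fun ⟨haU, hlt⟩ => ⟨⟨hUV haU, hlt⟩, haU, hlt.le⟩⟩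
  have := hsub {a ∈ V | r a < r e} {a ∈ U | r a ≤ r e}
  rw [hunion, hinter] at this
  rw [greedyIncrement, greedyIncrement]
  linarith

theorem greedyIncrement_nonneg (hmono : ∀ ⦃A B : Finset α⦄, A ⊆ B → f A ≤ f B)
    (U : Finset α) (e : α) : 0 ≤ greedyIncrement f r U e :=
  sub_nonneg.mpr <| hmono <| monotone_filter_right U fun _ _ => le_of_lt

variable [Fintype α] [DecidableEq α]

theorem memBasePoly_greedyIncrement
    (hsub : ∀ A B : Finset α, f (A ∪ B) + f (A ∩ B) ≤ f A + f B)
    (hmono : ∀ ⦃A B : Finset α⦄, A ⊆ B → f A ≤ f B) (hnorm : f ∅ = 0)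
    (hr : Function.Injective r) : memBasePoly f (greedyIncrement f r univ) := by
  refine ⟨greedyIncrement_nonneg hmono univ, fun U => ?_, sum_greedyIncrement hnorm hr univ⟩
  calc ∑ e ∈ U, greedyIncrement f r univ e
      ≤ ∑ e ∈ U, greedyIncrement f r U e :=
        sum_le_sum fun e he => greedyIncrement_antitone hsub hr (subset_univ U) he
    _ = f U := sum_greedyIncrement hnorm hr U

theorem sum_greedyIncrement_of_isLowerSet (hnorm : f ∅ = 0) (hr : Function.Injective r)
    {D : Finset α} (hD : ∀ a b, r a ≤ r b → b ∈ D → a ∈ D) :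
    ∑ e ∈ D, greedyIncrement f r univ e = f D := by
  rw [← sum_greedyIncrement hnorm hr D]
  refine sum_congr rfl fun e he => ?_
  have hbelow : ∀ a, r a ≤ r e → a ∈ D := fun a ha => hD a e ha he
  unfold greedyIncrement
  congr 2 <;> ext a <;> simp only [mem_filter, mem_univ, true_and]
  exacts [⟨fun ha => ⟨hbelow a ha, ha⟩, And.right⟩,
    ⟨fun ha => ⟨hbelow a ha.le, ha⟩, And.right⟩]

end Greedy

theorem sum_mul_eq_layerCake {ι : Type*} (s : Finset ι) (a : ℕ → ℝ) (ℓ : ι → ℕ) {K : ℕ}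
    (hℓ : ∀ e ∈ s, ℓ e ≤ K) (x : ι → ℝ) :
    ∑ e ∈ s, a (ℓ e) * x e
      = a K * ∑ e ∈ s, x e - ∑ n ∈ range K, (a (n + 1) - a n) * ∑ e ∈ s with ℓ e ≤ n, x e := by
  have hcoef : ∀ e ∈ s,
      a (ℓ e) = a K - ∑ n ∈ range K, if ℓ e ≤ n then a (n + 1) - a n else 0 := by
    intro e he
    have hIco : {n ∈ range K | ℓ e ≤ n} = Ico (ℓ e) K := by
      ext n; simp only [mem_filter, mem_range, mem_Ico]; omega
    rw [← sum_filter, hIco, sum_Ico_sub a (hℓ e he)]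
    ring
  calc ∑ e ∈ s, a (ℓ e) * x e
      = ∑ e ∈ s, (a K * x e - ∑ n ∈ range K, if ℓ e ≤ n then (a (n + 1) - a n) * x e else 0) :=
        sum_congr rfl fun e he => by simp only [hcoef e he, sub_mul, sum_mul, ite_mul, zero_mul]
    _ = _ := by
        rw [sum_sub_distrib, ← mul_sum, sum_comm]
        simp only [← sum_filter, ← mul_sum]

theorem sum_mul_sub_sum_mul_eq_sum_slack {ι : Type*} (s : Finset ι) (a : ℕ → ℝ) (ℓ : ι → ℕ)
    {K : ℕ} (hℓ : ∀ e ∈ s, ℓ e ≤ K) {x y : ι → ℝ} (hxy : ∑ e ∈ s, x e = ∑ e ∈ s, y e) :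
    ∑ e ∈ s, a (ℓ e) * y e - ∑ e ∈ s, a (ℓ e) * x e
      = ∑ n ∈ range K,
          (a (n + 1) - a n) * (∑ e ∈ s with ℓ e ≤ n, x e - ∑ e ∈ s with ℓ e ≤ n, y e) := by
  rw [sum_mul_eq_layerCake s a ℓ hℓ, sum_mul_eq_layerCake s a ℓ hℓ, hxy]
  simp only [mul_sub, sum_sub_distrib]
  ring

section Levels

variable {α : Type*} [Fintype α] {f : Finset α → ℝ}

theorem exists_memBasePoly_tight_sublevels [DecidableEq α] {γ : Type*} [LinearOrder γ]
    (hsub : ∀ A B : Finset α, f (A ∪ B) + f (A ∩ B) ≤ f A + f B)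
    (hmono : ∀ ⦃A B : Finset α⦄, A ⊆ B → f A ≤ f B) (hnorm : f ∅ = 0) (ℓ : α → γ) :
    ∃ g, memBasePoly f g ∧ ∀ t, ∑ e with ℓ e ≤ t, g e = f {e | ℓ e ≤ t} := by
  let r : α → γ ×ₗ Fin (Fintype.card α) := fun e => toLex (ℓ e, Fintype.equivFin α e)
  have hr : Function.Injective r := fun e e' h =>
    (Fintype.equivFin α).injective (congrArg Prod.snd (toLex.injective h))
  refine ⟨greedyIncrement f r univ, memBasePoly_greedyIncrement hsub hmono hnorm hr, fun t => ?_⟩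
  refine sum_greedyIncrement_of_isLowerSet hnorm hr fun a b hab hb => ?_
  simp only [mem_filter, mem_univ, true_and] at hb ⊢
  exact (Prod.Lex.monotone_fst _ _ hab).trans hb

variable {ℓ : α → ℕ} {k : ℕ} {a : ℕ → ℝ} {z : α → ℝ}

theorem sum_mul_le_of_tight (hℓ : ∀ e, ℓ e < k) (ha : ∀ n, n + 1 < k → a n ≤ a (n + 1))
    (hz : memBasePoly f z) (htight : ∀ n < k, ∑ e with ℓ e ≤ n, z e = f {e | ℓ e ≤ n})
    {z' : α → ℝ} (hz' : memBasePoly f z') : ∑ e, a (ℓ e) * z e ≤ ∑ e, a (ℓ e) * z' e := by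
  have hslack := sum_mul_sub_sum_mul_eq_sum_slack univ a ℓ (K := k - 1)
    (fun e _ => Nat.le_sub_one_of_lt (hℓ e)) (x := z) (y := z') (by rw [hz.2.2, hz'.2.2])
  have hnonneg : 0 ≤ ∑ n ∈ range (k - 1),
      (a (n + 1) - a n) * (∑ e with ℓ e ≤ n, z e - ∑ e with ℓ e ≤ n, z' e) := by
    refine sum_nonneg fun n hn => ?_
    rw [mem_range] at hn
    rw [htight n (by omega)]
    exact mul_nonneg (sub_nonneg.mpr (ha n (by omega))) (sub_nonneg.mpr (hz'.2.1 _))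
  linarith

theorem tight_of_forall_sum_mul_le [DecidableEq α]
    (hsub : ∀ A B : Finset α, f (A ∪ B) + f (A ∩ B) ≤ f A + f B)
    (hmono : ∀ ⦃A B : Finset α⦄, A ⊆ B → f A ≤ f B) (hnorm : f ∅ = 0)
    (hℓ : ∀ e, ℓ e < k) (ha : ∀ n, n + 1 < k → a n < a (n + 1)) (hz : memBasePoly f z)
    (hmin : ∀ z', memBasePoly f z' → ∑ e, a (ℓ e) * z e ≤ ∑ e, a (ℓ e) * z' e)
    {n : ℕ} (hn : n < k) : ∑ e with ℓ e ≤ n, z e = f {e | ℓ e ≤ n} := by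
  refine (hz.2.1 _).eq_or_lt.resolve_right fun hslack => ?_
  have hn' : n < k - 1 := by
    by_contra hlast
    have huniv : ({e | ℓ e ≤ n} : Finset α) = univ :=
      filter_true_of_mem fun e _ => by have := hℓ e; omega
    rw [huniv, hz.2.2] at hslack
    exact lt_irrefl _ hslack
  obtain ⟨g, hg, hgtight⟩ := exists_memBasePoly_tight_sublevels hsub hmono hnorm ℓ
  have hgap := sum_mul_sub_sum_mul_eq_sum_slack univ a ℓ (K := k - 1)
    (fun e _ => Nat.le_sub_one_of_lt (hℓ e)) (x := g) (y := z) (by rw [hg.2.2, hz.2.2])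
  have hpos : 0 < ∑ m ∈ range (k - 1),
      (a (m + 1) - a m) * (∑ e with ℓ e ≤ m, g e - ∑ e with ℓ e ≤ m, z e) := by
    refine sum_pos' (fun m hm => ?_) ⟨n, mem_range.mpr hn', ?_⟩
    · rw [mem_range] at hm
      rw [hgtight m]
      exact mul_nonneg (sub_nonneg.mpr (ha m (by omega)).le) (sub_nonneg.mpr (hz.2.1 _))
    · rw [hgtight n]
      exact mul_pos (sub_pos.mpr (ha n (by omega))) (sub_pos.mpr hslack)
  linarith [hmin g hg]

theorem forall_sum_mul_le_iff_tight [DecidableEq α]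
    (hsub : ∀ A B : Finset α, f (A ∪ B) + f (A ∩ B) ≤ f A + f B)
    (hmono : ∀ ⦃A B : Finset α⦄, A ⊆ B → f A ≤ f B) (hnorm : f ∅ = 0)
    (hℓ : ∀ e, ℓ e < k) (ha : ∀ n, n + 1 < k → a n < a (n + 1)) (hz : memBasePoly f z) :
    (∀ z', memBasePoly f z' → ∑ e, a (ℓ e) * z e ≤ ∑ e, a (ℓ e) * z' e) ↔
      ∀ n < k, ∑ e with ℓ e ≤ n, z e = f {e | ℓ e ≤ n} :=
  ⟨fun hmin _ hn => tight_of_forall_sum_mul_le hsub hmono hnorm hℓ ha hz hmin hn,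
    fun htight _ hz' => sum_mul_le_of_tight hℓ (fun n hn => (ha n hn).le) hz htight hz'⟩

end Levels

/-- Edmonds' greedy characterization: `z ∈ B(f)` minimizes the linear
function `wᵀz` over `B(f)` iff `z` is tight on every prefix union of the level sets
of `w` (taken in increasing order of the weight values). -/
theorem linear_min_iff_prefix_tight {α : Type*} [Fintype α] [DecidableEq α]
    (f : Finset α → ℝ)
    (hsub : ∀ A B : Finset α, f (A ∪ B) + f (A ∩ B) ≤ f A + f B)
    (hmono : ∀ ⦃A B : Finset α⦄, A ⊆ B → f A ≤ f B)
    (hnorm : f ∅ = 0)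
    (w : α → ℝ)
    (k : ℕ) (c : Fin k → ℝ) (hc : StrictMono c)
    (F : Fin k → Finset α)
    (hpart : ∀ e : α, ∃! i : Fin k, e ∈ F i)
    (hlev : ∀ i : Fin k, ∀ e ∈ F i, w e = c i)
    (z : α → ℝ) (hz : memBasePoly f z) :
    (∀ z' : α → ℝ, memBasePoly f z' → ∑ e, w e * z e ≤ ∑ e, w e * z' e) ↔
    (∀ i : Fin k,
      ∑ e ∈ (univ.filter (fun j : Fin k => j ≤ i)).biUnion F, z e
        = f ((univ.filter (fun j : Fin k => j ≤ i)).biUnion F)) := by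
  choose idx hidx huniq using hpart
  let a : ℕ → ℝ := fun n => if h : n < k then c ⟨n, h⟩ else 0
  have hw : ∀ e, w e = a (idx e) := fun e => by simp [a, hlev _ e (hidx e)]
  have ha : ∀ n, n + 1 < k → a n < a (n + 1) := fun n hn => by
    simpa [a, hn, Nat.lt_of_succ_lt hn] using hc (Fin.mk_lt_mk.mpr n.lt_succ_self)
  have hprefix : ∀ i : Fin k, (univ.filter (fun j : Fin k => j ≤ i)).biUnion F
      = ({e | (idx e : ℕ) ≤ i} : Finset α) := fun i => by
    refine Finset.ext fun e => ?_
    simp only [mem_biUnion, mem_filter, mem_univ, true_and, Fin.le_def]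
    exact ⟨fun ⟨j, hji, hej⟩ => huniq e j hej ▸ hji, fun h => ⟨idx e, h, hidx e⟩⟩
  simp only [hw, hprefix, Fin.forall_iff]
  exact forall_sum_mul_le_iff_tight hsub hmono hnorm (fun e => (idx e).isLt) ha hz
end

section
/- Let M = (E, ℐ) be a matroid with rank function r, and let L ∈ ℝ^{E×E} be a symmetric loss matrix (L^T = L). Let x be in the base polytope B(M), and partition E into P₁,...,P_k so that (Lx)(e) = c_i for e ∈ P_i with c₁ < ... < c_k. Then (x, x) is a symmetric Nash equilibrium of the zero-sum game min_{z∈B(M)} max_{w∈B(M)} z^T L w if and only if all bases of M have the same total weight with respect to the weight vector Lx. -/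
open Finset Matrix

/-- A matroid on a finite ground set, given by its independent sets. -/
structure FinMatroid (α : Type*) [Fintype α] [DecidableEq α] where
  Indep : Finset α → Prop
  indep_empty : Indep ∅
  indep_subset : ∀ ⦃A B : Finset α⦄, Indep B → A ⊆ B → Indep A
  indep_exchange : ∀ ⦃A B : Finset α⦄, Indep A → Indep B → A.card < B.card →
    ∃ e ∈ B, e ∉ A ∧ Indep (insert e A)

attribute [instance] Classical.propDecidable

/-- The rank of a set: maximum cardinality of an independent subset. -/
noncomputable def FinMatroid.rank {α : Type*} [Fintype α] [DecidableEq α]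
    (M : FinMatroid α) (S : Finset α) : ℕ :=
  (S.powerset.filter (fun A => M.Indep A)).sup Finset.card

/-- A base: a maximal independent set. -/
def FinMatroid.IsBase {α : Type*} [Fintype α] [DecidableEq α]
    (M : FinMatroid α) (B : Finset α) : Prop :=
  M.Indep B ∧ ∀ A : Finset α, M.Indep A → B ⊆ A → A = B

/-- Membership in the matroid base polytope `B(M)`. -/
noncomputable def FinMatroid.memBasePolytope {α : Type*} [Fintype α] [DecidableEq α]
    (M : FinMatroid α) (x : α → ℝ) : Prop :=
  (∀ e, 0 ≤ x e) ∧ (∀ S : Finset α, ∑ e ∈ S, x e ≤ (M.rank S : ℝ)) ∧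
    (∑ e, x e = (M.rank univ : ℝ))

/-! Since `L` is symmetric, `x ⬝ᵥ L *ᵥ y = (L *ᵥ x) ⬝ᵥ y`, so `(x, x)` is an equilibrium exactly
when `w = L *ᵥ x` is constant on `B(M)`. Indicators of bases lie in `B(M)`, which gives one
direction. For the other, a greedy base `B`, meeting every sublevel set `{w ≤ u}` in a set of
full rank, minimises `w` over all of `B(M)`: the rank inequalities say that `y - 1_B` has
nonpositive sum on every sublevel set, and summation by parts over the levels of `w` turns this
into `w(B) ≤ w ⬝ᵥ y`. Applied to `w` and `-w`, this squeezes `w ⬝ᵥ y` between two base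
weights, which are equal by assumption. -/

theorem Finset.sum_sub_mul_nonpos_of_sum_sublevel_nonpos {ι : Type*} (w d : ι → ℝ)
    (s : Finset ι) {t : ℝ} (hwt : ∀ e ∈ s, w e ≤ t)
    (hd : ∀ u < t, ∑ e ∈ s with w e ≤ u, d e ≤ 0) :
    ∑ e ∈ s, (t - w e) * d e ≤ 0 := by
  classical
  induction s using Finset.induction_on_max_value w generalizing t with
  | empty => simp
  | insert a s _ hmax ih =>
    have hwa : w a ≤ t := hwt a (mem_insert_self a s)
    have hsplit : ∑ e ∈ insert a s, (t - w e) * d e =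
        (t - w a) * ∑ e ∈ insert a s, d e + ∑ e ∈ s, (w a - w e) * d e := by
      rw [mul_sum, ← sum_insert_of_eq_zero_if_notMem (s := s) (a := a) (by simp),
        ← sum_add_distrib]
      exact sum_congr rfl fun e _ => by ring
    have htop : (t - w a) * ∑ e ∈ insert a s, d e ≤ 0 := by
      rcases hwa.lt_or_eq with hlt | rfl
      · refine mul_nonpos_of_nonneg_of_nonpos (sub_nonneg.2 hlt.le) ?_
        have hall : ∀ e ∈ insert a s, w e ≤ w a := fun e he =>
          (mem_insert.1 he).elim (fun h => h ▸ le_rfl) (hmax e)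
        simpa only [filter_true_of_mem hall] using hd (w a) hlt
      · simp
    have hbelow : ∑ e ∈ s, (w a - w e) * d e ≤ 0 := ih hmax fun u hu => by
      simpa [filter_insert, hu.not_ge] using hd u (hu.trans_le hwa)
    linarith

theorem Finset.sum_mul_nonneg_of_sum_sublevel_nonpos {ι : Type*} [Fintype ι] (w d : ι → ℝ)
    (hsum : ∑ e, d e = 0) (hd : ∀ u, ∑ e with w e ≤ u, d e ≤ 0) :
    0 ≤ ∑ e, w e * d e := by
  obtain ⟨t, ht⟩ := (Set.finite_range w).bddAbove
  have := univ.sum_sub_mul_nonpos_of_sum_sublevel_nonpos w d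
    (fun e _ => ht (Set.mem_range_self e)) (fun u _ => hd u)
  simpa only [sub_mul, sum_sub_distrib, ← mul_sum, hsum, mul_zero, zero_sub,
    neg_nonpos] using this

theorem dotProduct_ite_mem {α : Type*} [Fintype α] (w : α → ℝ) (B : Finset α)
    [DecidablePred (· ∈ B)] :
    w ⬝ᵥ (fun e => if e ∈ B then 1 else 0) = ∑ e ∈ B, w e := by
  simp [dotProduct]

namespace FinMatroid

variable {α : Type*} [Fintype α] [DecidableEq α] (M : FinMatroid α)

theorem card_le_rank {I S : Finset α} (hI : M.Indep I) (hIS : I ⊆ S) : #I ≤ M.rank S :=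
  le_sup (mem_filter.2 ⟨mem_powerset.2 hIS, hI⟩)

theorem exists_indep_card_eq_rank (S : Finset α) :
    ∃ I ⊆ S, M.Indep I ∧ #I = M.rank S := by
  obtain ⟨I, hI, hcard⟩ := exists_mem_eq_sup (S.powerset.filter M.Indep)
    ⟨∅, mem_filter.2 ⟨empty_mem_powerset S, M.indep_empty⟩⟩ card
  rw [mem_filter, mem_powerset] at hI
  exact ⟨I, hI.1, hI.2, hcard.symm⟩

theorem exists_indep_superset_card_eq_rank {I S : Finset α} (hI : M.Indep I) (hIS : I ⊆ S) :
    ∃ J, I ⊆ J ∧ J ⊆ S ∧ M.Indep J ∧ #J = M.rank S := by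
  obtain ⟨J, hJ, hmax⟩ := (S.powerset.filter fun J => I ⊆ J ∧ M.Indep J).exists_max_image card
    ⟨I, by simp [hIS, hI]⟩
  simp only [mem_filter, mem_powerset] at hJ hmax
  obtain ⟨hJS, hIJ, hJ⟩ := hJ
  refine ⟨J, hIJ, hJS, hJ, (M.card_le_rank hJ hJS).antisymm (not_lt.1 fun hlt => ?_)⟩
  obtain ⟨A, hAS, hA, hAcard⟩ := M.exists_indep_card_eq_rank S
  obtain ⟨e, heA, heJ, hins⟩ := M.indep_exchange hJ hA (hAcard ▸ hlt)
  have := hmax (insert e J) ⟨insert_subset (hAS heA) hJS, hIJ.trans (subset_insert e J), hins⟩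
  rw [card_insert_of_notMem heJ] at this
  omega

theorem exists_indep_forall_card_sublevel_eq_rank (w : α → ℝ) (s : Finset α) :
    ∃ I ⊆ s, M.Indep I ∧ ∀ u, #{e ∈ I | w e ≤ u} = M.rank {e ∈ s | w e ≤ u} := by
  induction s using Finset.induction_on_max_value w with
  | empty =>
    exact ⟨∅, empty_subset _, M.indep_empty, fun u => by
      simp [rank, filter_singleton, M.indep_empty]⟩
  | insert a s _ hmax ih =>
    obtain ⟨I, hIs, hI, hIcard⟩ := ih
    obtain ⟨J, hIJ, hJs, hJ, hJcard⟩ :=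
      M.exists_indep_superset_card_eq_rank hI (hIs.trans (subset_insert a s))
    refine ⟨J, hJs, hJ, fun u => ?_⟩
    by_cases hau : w a ≤ u
    · have hall : ∀ e ∈ insert a s, w e ≤ u := fun e he =>
        (mem_insert.1 he).elim (fun h => h ▸ hau) fun he => (hmax e he).trans hau
      rw [filter_true_of_mem hall, filter_true_of_mem fun e he => hall e (hJs he), hJcard]
    · rw [filter_insert, if_neg hau]
      refine (M.card_le_rank (M.indep_subset hJ (filter_subset _ _)) fun e he => ?_).antisymm ?_
      · rw [mem_filter] at he ⊢
        exact ⟨(mem_insert.1 (hJs he.1)).resolve_left fun h => hau (h ▸ he.2), he.2⟩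
      · exact hIcard u ▸ card_le_card (filter_subset_filter _ hIJ)

variable {M}

theorem IsBase.card_eq_rank {B : Finset α} (hB : M.IsBase B) : #B = M.rank univ := by
  refine (M.card_le_rank hB.1 (subset_univ B)).antisymm (not_lt.1 fun hlt => ?_)
  obtain ⟨A, -, hA, hAcard⟩ := M.exists_indep_card_eq_rank univ
  obtain ⟨e, -, heB, hins⟩ := M.indep_exchange hB.1 hA (hAcard ▸ hlt)
  exact heB (hB.2 _ hins (subset_insert e B) ▸ mem_insert_self e B)

theorem isBase_of_indep_of_card_eq_rank {B : Finset α} (hB : M.Indep B)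
    (hcard : #B = M.rank univ) : M.IsBase B :=
  ⟨hB, fun A hA hBA =>
    (eq_of_subset_of_card_le hBA (hcard ▸ M.card_le_rank hA (subset_univ A))).symm⟩

theorem IsBase.memBasePolytope_indicator {B : Finset α} (hB : M.IsBase B) :
    M.memBasePolytope fun e => if e ∈ B then 1 else 0 := by
  refine ⟨fun e => by positivity, fun S => ?_, ?_⟩
  · rw [sum_boole]
    exact_mod_cast M.card_le_rank (M.indep_subset hB.1 fun e he => (mem_filter.1 he).2)
      (filter_subset _ S)
  · rw [sum_boole, filter_mem_eq_inter, univ_inter, hB.card_eq_rank]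

variable (M)

theorem exists_isBase_forall_sum_le_dotProduct (w : α → ℝ) :
    ∃ B, M.IsBase B ∧ ∀ y, M.memBasePolytope y → ∑ e ∈ B, w e ≤ w ⬝ᵥ y := by
  obtain ⟨B, -, hB, hcard⟩ := M.exists_indep_forall_card_sublevel_eq_rank w univ
  obtain ⟨t, ht⟩ := (Set.finite_range w).bddAbove
  have hBbase : M.IsBase B := isBase_of_indep_of_card_eq_rank hB <| by
    simpa only [filter_true_of_mem fun e _ => ht (Set.mem_range_self e)] using hcard t
  refine ⟨B, hBbase, fun y hy => ?_⟩
  have hdiff := sum_mul_nonneg_of_sum_sublevel_nonpos w (fun e => y e - if e ∈ B then 1 else 0)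
    ?_ fun u => ?_
  · rw [← dotProduct_ite_mem, ← sub_nonneg, ← dotProduct_sub]
    exact hdiff
  · rw [sum_sub_distrib, sum_boole, filter_mem_eq_inter, univ_inter, hy.2.2,
      hBbase.card_eq_rank, sub_self]
  · have hsub : ({e | w e ≤ u} : Finset α).filter (· ∈ B) = {e ∈ B | w e ≤ u} := by
      ext e; simp [and_comm]
    rw [sum_sub_distrib, sum_boole, hsub, hcard u, sub_nonpos]
    exact hy.2.1 _

theorem exists_isBase : ∃ B, M.IsBase B := by
  obtain ⟨B, -, hB, hcard⟩ := M.exists_indep_card_eq_rank univ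
  exact ⟨B, isBase_of_indep_of_card_eq_rank hB hcard⟩

variable {M}

theorem dotProduct_eq_sum_of_forall_isBase_sum_eq {w : α → ℝ}
    (hw : ∀ B₁ B₂, M.IsBase B₁ → M.IsBase B₂ → ∑ e ∈ B₁, w e = ∑ e ∈ B₂, w e)
    {B : Finset α} (hB : M.IsBase B) {y : α → ℝ} (hy : M.memBasePolytope y) :
    w ⬝ᵥ y = ∑ e ∈ B, w e := by
  obtain ⟨B₁, hB₁, hle⟩ := M.exists_isBase_forall_sum_le_dotProduct w
  obtain ⟨B₂, hB₂, hge⟩ := M.exists_isBase_forall_sum_le_dotProduct (-w)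
  have h₁ := hle y hy
  have h₂ := hge y hy
  rw [neg_dotProduct, Pi.neg_def, sum_neg_distrib, neg_le_neg_iff] at h₂
  linarith [hw B₁ B hB₁ hB, hw B₂ B hB₂ hB]

end FinMatroid

theorem symmetric_nash_iff_bases_equal_weight_general {α : Type*} [Fintype α] [DecidableEq α]
    (M : FinMatroid α)
    (L : Matrix α α ℝ) (hL : L.IsSymm)
    (x : α → ℝ) (hx : M.memBasePolytope x) :
    ((∀ y : α → ℝ, M.memBasePolytope y → x ⬝ᵥ L.mulVec y ≤ x ⬝ᵥ L.mulVec x) ∧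
     (∀ z : α → ℝ, M.memBasePolytope z → x ⬝ᵥ L.mulVec x ≤ z ⬝ᵥ L.mulVec x)) ↔
    (∀ B₁ B₂ : Finset α, M.IsBase B₁ → M.IsBase B₂ →
      ∑ e ∈ B₁, L.mulVec x e = ∑ e ∈ B₂, L.mulVec x e) := by
  have hsymm (y : α → ℝ) : x ⬝ᵥ L *ᵥ y = L *ᵥ x ⬝ᵥ y := by
    rw [dotProduct_mulVec, ← mulVec_transpose, hL.eq, dotProduct_comm]
  simp only [hsymm, dotProduct_comm _ (L *ᵥ x)]
  set w := L *ᵥ x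
  constructor
  · rintro ⟨hmax, hmin⟩ B₁ B₂ hB₁ hB₂
    have hbase {B : Finset α} (hB : M.IsBase B) : ∑ e ∈ B, w e = w ⬝ᵥ x := by
      have hle := hmax _ hB.memBasePolytope_indicator
      have hge := hmin _ hB.memBasePolytope_indicator
      rw [dotProduct_ite_mem] at hle hge
      exact le_antisymm hle hge
    rw [hbase hB₁, hbase hB₂]
  · intro hw
    obtain ⟨B, hB⟩ := M.exists_isBase
    have hconst {y : α → ℝ} (hy : M.memBasePolytope y) : w ⬝ᵥ y = w ⬝ᵥ x :=
      (FinMatroid.dotProduct_eq_sum_of_forall_isBase_sum_eq hw hB hy).trans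
        (FinMatroid.dotProduct_eq_sum_of_forall_isBase_sum_eq hw hB hx).symm
    exact ⟨fun y hy => (hconst hy).le, fun z hz => (hconst hz).ge⟩

/-- for a symmetric loss matrix `L` and `x ∈ B(M)` with level-set partition
`P₁,…,P_k` of `Lx`, the pair `(x,x)` is a symmetric Nash equilibrium iff all bases of `M`
have the same total weight with respect to the weight vector `Lx`. -/
theorem symmetric_nash_iff_bases_equal_weight {α : Type*} [Fintype α] [DecidableEq α]
    (M : FinMatroid α)
    (L : Matrix α α ℝ) (hL : L.IsSymm)
    (x : α → ℝ) (hx : M.memBasePolytope x)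
    (k : ℕ) (c : Fin k → ℝ) (hc : StrictMono c)
    (P : Fin k → Finset α)
    (hpart : ∀ e : α, ∃! i : Fin k, e ∈ P i)
    (hlev : ∀ i : Fin k, ∀ e ∈ P i, L.mulVec x e = c i) :
    ((∀ y : α → ℝ, M.memBasePolytope y → x ⬝ᵥ L.mulVec y ≤ x ⬝ᵥ L.mulVec x) ∧
     (∀ z : α → ℝ, M.memBasePolytope z → x ⬝ᵥ L.mulVec x ≤ z ⬝ᵥ L.mulVec x)) ↔
    (∀ B₁ B₂ : Finset α, M.IsBase B₁ → M.IsBase B₂ →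
      ∑ e ∈ B₁, L.mulVec x e = ∑ e ∈ B₂, L.mulVec x e) :=
  symmetric_nash_iff_bases_equal_weight_general M L hL x hx
end

section
/- Let M = (E, ℐ) be a matroid with rank function r, and let P₁,...,P_k be a partition of E. Then every base B of M satisfies |B ∩ P_i| = r(P_i) for all i if and only if every circuit C of M is contained in some single part P_i. -/
open Finset Matrix

/-- A circuit: a minimal dependent set. -/
def FinMatroid.IsCircuit {α : Type*} [Fintype α] [DecidableEq α]
    (M : FinMatroid α) (C : Finset α) : Prop :=
  ¬ M.Indep C ∧ ∀ e ∈ C, M.Indep (C.erase e)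

/-!
If every circuit lies in a single part, a base `B` meets each part `P` in a maximal independent
subset of `P`: adding `x ∈ P \ B` to `B` creates a circuit through `x`, which lies in `P` and
hence in `(B ∩ P) + x`. Conversely, if a circuit `C` met a part `P` at `e` and left it at `f`,
extend `C - e` to a base `B`; then `B - f + e` is again a base and meets `P` in one more element
than `B`.
-/

namespace FinMatroid

variable {α : Type*} [Fintype α] [DecidableEq α] {M : FinMatroid α} {A B C S P : Finset α}
  {e f x : α}

def IsBasis (M : FinMatroid α) (B S : Finset α) : Prop :=
  Maximal (fun I => M.Indep I ∧ I ⊆ S) B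

lemma isBasis_iff_forall_insert :
    M.IsBasis B S ↔ M.Indep B ∧ B ⊆ S ∧ ∀ x ∈ S, x ∉ B → ¬ M.Indep (insert x B) := by
  rw [IsBasis, maximal_iff_forall_insert fun I J hJ hIJ =>
    ⟨M.indep_subset hJ.1 hIJ, hIJ.trans hJ.2⟩]
  refine and_assoc.trans (and_congr_right fun _ => and_congr_right fun hBS => ?_)
  exact ⟨fun h x hxS hxB hx => h x hxB ⟨hx, insert_subset hxS hBS⟩,
    fun h x hxB hx => h x (hx.2 (mem_insert_self x B)) hxB hx.1⟩

lemma Indep.exists_isBasis_superset (hA : M.Indep A) (hAS : A ⊆ S) :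
    ∃ B, A ⊆ B ∧ M.IsBasis B S :=
  Finite.exists_le_maximal (p := fun I => M.Indep I ∧ I ⊆ S) ⟨hA, hAS⟩

lemma IsBasis.card_le (hB : M.IsBasis B S) (hA : M.Indep A) (hAS : A ⊆ S) :
    A.card ≤ B.card := by
  obtain ⟨hBi, hBS, hBmax⟩ := isBasis_iff_forall_insert.1 hB
  by_contra! hlt
  obtain ⟨x, hxA, hxB, hx⟩ := M.indep_exchange hBi hA hlt
  exact hBmax x (hAS hxA) hxB hx

lemma IsBasis.rank_eq (hB : M.IsBasis B S) : M.rank S = B.card := by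
  refine le_antisymm (Finset.sup_le fun A hA => ?_) (le_sup ?_)
  · rw [mem_filter, mem_powerset] at hA
    exact hB.card_le hA.2 hA.1
  · exact mem_filter.2 ⟨mem_powerset.2 hB.prop.2, hB.prop.1⟩

lemma isBase_iff_isBasis_univ : M.IsBase B ↔ M.IsBasis B univ := by
  simp only [IsBase, IsBasis, Maximal, subset_univ, and_true]
  exact and_congr_right fun _ =>
    ⟨fun h A hA hBA => (h A hA hBA).le, fun h A hA hBA => subset_antisymm (h hA hBA) hBA⟩

lemma IsBase.card_le (hB : M.IsBase B) (hA : M.Indep A) : A.card ≤ B.card :=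
  (isBase_iff_isBasis_univ.1 hB).card_le hA (subset_univ A)

lemma IsBase.isBase_of_card_eq (hB : M.IsBase B) (hA : M.Indep A) (hAB : A.card = B.card) :
    M.IsBase A :=
  ⟨hA, fun _ hY hAY => (eq_of_subset_of_card_le hAY (hAB ▸ hB.card_le hY)).symm⟩

lemma IsBase.not_indep_insert (hB : M.IsBase B) (hx : x ∉ B) : ¬ M.Indep (insert x B) :=
  fun hind => hx (hB.2 _ hind (subset_insert x B) ▸ mem_insert_self x B)

lemma Indep.exists_isBase_superset (hA : M.Indep A) : ∃ B, A ⊆ B ∧ M.IsBase B := by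
  obtain ⟨B, hAB, hB⟩ := hA.exists_isBasis_superset (subset_univ A)
  exact ⟨B, hAB, isBase_iff_isBasis_univ.2 hB⟩

lemma isCircuit_iff_minimal : M.IsCircuit C ↔ Minimal (fun D => ¬ M.Indep D) C := by
  rw [minimal_iff_forall_erase fun D E hD hDE hE => hD (M.indep_subset hE hDE)]
  simp only [IsCircuit, not_not]

lemma exists_isCircuit_subset (hS : ¬ M.Indep S) : ∃ C ⊆ S, M.IsCircuit C := by
  obtain ⟨C, hCS, hC⟩ := Finite.exists_le_minimal (p := fun D => ¬ M.Indep D) hS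
  exact ⟨C, hCS, isCircuit_iff_minimal.2 hC⟩

lemma exists_isCircuit_mem_subset_insert (hB : M.Indep B) (hx : ¬ M.Indep (insert x B)) :
    ∃ C ⊆ insert x B, x ∈ C ∧ M.IsCircuit C := by
  obtain ⟨C, hCxB, hC⟩ := exists_isCircuit_subset hx
  refine ⟨C, hCxB, by_contra fun hxC => hC.1 (M.indep_subset hB fun y hy => ?_), hC⟩
  exact (mem_insert.1 (hCxB hy)).resolve_left (by rintro rfl; exact hxC hy)

lemma IsCircuit.nonempty (hC : M.IsCircuit C) : C.Nonempty :=
  nonempty_iff_ne_empty.2 (by rintro rfl; exact hC.1 M.indep_empty)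

lemma IsCircuit.notMem_of_erase_subset (hC : M.IsCircuit C) (hB : M.Indep B) (heC : e ∈ C)
    (hCB : C.erase e ⊆ B) : e ∉ B := fun heB =>
  hC.1 <| M.indep_subset hB <|
    insert_eq_of_mem heB ▸ insert_erase heC ▸ insert_subset_insert e hCB

lemma IsBase.insert_erase_of_isCircuit (hB : M.IsBase B) (hC : M.IsCircuit C) (heC : e ∈ C)
    (hCB : C.erase e ⊆ B) (hfC : f ∈ C) (hfe : f ≠ e) : M.IsBase (insert e (B.erase f)) := by
  have hfB : f ∈ B := hCB (mem_erase.2 ⟨hfe, hfC⟩)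
  have heB : e ∉ B.erase f := fun he =>
    hC.notMem_of_erase_subset hB.1 heC hCB (mem_of_mem_erase he)
  have hcard : (insert e (B.erase f)).card = B.card := by
    rw [card_insert_of_notMem heB, card_erase_add_one hfB]
  -- A basis of `B + e` through `C - f` misses `f` (else it contains `C`), so it is `B - f + e`.
  have hCf : C.erase f ⊆ insert e B :=
    (erase_subset f C).trans (insert_erase heC ▸ insert_subset_insert e hCB)
  obtain ⟨A, hCfA, hA⟩ := (hC.2 f hfC).exists_isBasis_superset hCf
  have hfA : f ∉ A := fun hfA =>
    hC.1 (M.indep_subset hA.prop.1 (insert_erase hfC ▸ insert_subset hfA hCfA))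
  have hAsub : A ⊆ insert e (B.erase f) := by
    rw [← erase_insert_of_ne hfe.symm]
    exact subset_erase.2 ⟨hA.prop.2, hfA⟩
  have hAcard : B.card ≤ A.card := hA.card_le hB.1 (subset_insert e B)
  rw [← eq_of_subset_of_card_le hAsub (hcard ▸ hAcard)]
  exact hB.isBase_of_card_eq hA.prop.1 (le_antisymm (hB.card_le hA.prop.1) hAcard)

lemma IsCircuit.subset_of_card_inter_eq_rank (hP : ∀ B, M.IsBase B → (B ∩ P).card = M.rank P)
    (hC : M.IsCircuit C) (heC : e ∈ C) (heP : e ∈ P) : C ⊆ P := by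
  intro f hfC
  by_contra hfP
  have hfe : f ≠ e := by rintro rfl; exact hfP heP
  obtain ⟨B, hCB, hB⟩ := (hC.2 e heC).exists_isBase_superset
  have heBP : e ∉ B ∩ P := fun he => hC.notMem_of_erase_subset hB.1 heC hCB (mem_inter.1 he).1
  have hexchange : insert e (B.erase f) ∩ P = insert e (B ∩ P) := by
    rw [insert_inter_of_mem heP, erase_inter, erase_eq_of_notMem fun hf => hfP (mem_inter.1 hf).2]
  have := hP _ (hB.insert_erase_of_isCircuit hC heC hCB hfC hfe)
  rw [hexchange, card_insert_of_notMem heBP, hP B hB] at this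
  omega

lemma IsBase.isBasis_inter (hB : M.IsBase B)
    (hP : ∀ C, M.IsCircuit C → ∀ x ∈ C, x ∈ P → C ⊆ P) : M.IsBasis (B ∩ P) P := by
  refine isBasis_iff_forall_insert.2
    ⟨M.indep_subset hB.1 inter_subset_left, inter_subset_right, fun x hxP hxBP hind => ?_⟩
  have hxB : x ∉ B := fun hxB => hxBP (mem_inter.2 ⟨hxB, hxP⟩)
  obtain ⟨C, hCxB, hxC, hC⟩ := exists_isCircuit_mem_subset_insert hB.1 (hB.not_indep_insert hxB)
  have hCsub : C ⊆ insert x (B ∩ P) :=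
    insert_inter_of_mem hxP ▸ subset_inter hCxB (hP C hC x hxC hxP)
  exact hC.1 (M.indep_subset hind hCsub)

lemma forall_isBase_card_inter_eq_rank_iff :
    (∀ B, M.IsBase B → (B ∩ P).card = M.rank P) ↔
      ∀ C, M.IsCircuit C → ∀ x ∈ C, x ∈ P → C ⊆ P :=
  ⟨fun hP _ hC _ hxC hxP => hC.subset_of_card_inter_eq_rank hP hxC hxP,
    fun hP _ hB => (hB.isBasis_inter hP).rank_eq.symm⟩

end FinMatroid

/-- for a partition `P₁,…,P_k` of the ground set, every base `B` satisfies
`|B ∩ Pᵢ| = r(Pᵢ)` for all `i` iff every circuit is contained in a single part. -/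
theorem full_rank_intersection_iff_circuits_in_parts {α : Type*} [Fintype α] [DecidableEq α]
    (M : FinMatroid α)
    (k : ℕ) (P : Fin k → Finset α)
    (hpart : ∀ e : α, ∃! i : Fin k, e ∈ P i) :
    (∀ B : Finset α, M.IsBase B → ∀ i : Fin k, (B ∩ P i).card = M.rank (P i)) ↔
    (∀ C : Finset α, M.IsCircuit C → ∃ i : Fin k, C ⊆ P i) := by
  have hparts : (∀ i, ∀ C, M.IsCircuit C → ∀ x ∈ C, x ∈ P i → C ⊆ P i) ↔
      ∀ C, M.IsCircuit C → ∃ i, C ⊆ P i := by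
    refine ⟨fun h C hC => ?_, fun h i C hC x hxC hxi => ?_⟩
    · obtain ⟨x, hxC⟩ := hC.nonempty
      obtain ⟨i, hxi, -⟩ := hpart x
      exact ⟨i, h i C hC x hxC hxi⟩
    · obtain ⟨j, hCj⟩ := h C hC
      obtain rfl := (hpart x).unique (hCj hxC) hxi
      exact hCj
  rw [← hparts, ← forall_congr' fun i => FinMatroid.forall_isBase_card_inter_eq_rank_iff]
  exact ⟨fun h i B hB => h B hB i, fun h B hB i => h i B hB⟩
end

section
/- Let G = (V, E) be a connected graph and consider the game where each player plays a spanning tree of G with loss matrix the identity (loss = |T₁ ∩ T₂| in expectation, i.e., x^T y on marginals). A point x in the spanning tree base polytope gives a symmetric Nash equilibrium (x, x) if and only if x is constant on each block (2-edge-connected/biconnected component) of G and each block is uniformly dense; equivalently, x(P_i) = r(P_i) for the level sets P_i of x, where r is the graphic matroid rank. -/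
open Finset

/-- Rank function of the graphic matroid: the maximum cardinality of an acyclic
subset of a given edge set. -/
noncomputable def graphicRank {V : Type*} [Fintype V] [DecidableEq V]
    (S : Finset (Sym2 V)) : ℕ :=
  (S.powerset.filter
    (fun T : Finset (Sym2 V) => (SimpleGraph.fromEdgeSet (↑T : Set (Sym2 V))).IsAcyclic)).sup Finset.card

/-- Membership in the spanning tree (graphic matroid base) polytope of `G`. -/
noncomputable def memSpanningTreePolytope {V : Type*} [Fintype V] [DecidableEq V]
    (G : SimpleGraph V) [DecidableRel G.Adj] (z : Sym2 V → ℝ) : Prop :=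
  (∀ e, 0 ≤ z e) ∧ (∀ e ∉ G.edgeFinset, z e = 0) ∧
    (∀ S ⊆ G.edgeFinset, ∑ e ∈ S, z e ≤ (graphicRank S : ℝ)) ∧
    (∑ e ∈ G.edgeFinset, z e = (graphicRank G.edgeFinset : ℝ))

/-!
Over `𝔽₂` a set of edges is a forest iff its incidence vectors are linearly independent, so
`graphicRank S` is the dimension of the span of the incidence vectors of `S`. This makes the rank
submodular and lets every forest inside an edge set be extended to a maximal one. Extending forests
along a chain of edge sets gives a maximal forest `T` that is maximal in every upper level set of a
weight `w` at once, and the layer-cake decomposition `w = ∑ gap_c • 𝟙{c ≤ w}` then shows that a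
point `x` of the polytope maximising `w` is tight on all these level sets.

At a symmetric equilibrium `y ↦ x ⬝ y` is constant on the polytope, so `x` maximises both
`1 + x` and `M - x`: the upper and the lower level sets of `x` are tight, and submodularity turns
this into tightness of `{x = c} = {c ≤ x} ∩ {x ≤ c}`. Conversely, if every level set `P_c` is tight,
then `y(P_c) ≤ r(P_c) = x(P_c)` with equal totals forces `y(P_c) = x(P_c)`, hence
`x ⬝ y = ∑ c • y(P_c) = x ⬝ x`.
-/

open SimpleGraph Submodule

lemma finrank_span_image_eq_card {K M ι : Type*} [DivisionRing K] [AddCommGroup M] [Module K M]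
    {v : ι → M} {s : Finset ι} (hs : LinearIndepOn K v (s : Set ι)) :
    Module.finrank K (span K (v '' s)) = s.card := by
  rw [Set.image_eq_range, finrank_span_eq_card hs]
  simp

lemma exists_linearIndepOn_finset_extension {K M ι : Type*} [DivisionRing K] [AddCommGroup M]
    [Module K M] {v : ι → M} {I S : Finset ι} (hI : LinearIndepOn K v (I : Set ι)) (hIS : I ⊆ S) :
    ∃ T : Finset ι, I ⊆ T ∧ T ⊆ S ∧ LinearIndepOn K v (T : Set ι) ∧
      T.card = Module.finrank K (span K (v '' S)) := by
  obtain ⟨b, hbS, hIb, hspan, hb⟩ := exists_linearIndepOn_extension hI (coe_subset.mpr hIS)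
  set T := (S.finite_toSet.subset hbS).toFinset
  have hT : (T : Set ι) = b := Set.Finite.coe_toFinset _
  refine ⟨T, by rwa [← coe_subset, hT], by rwa [← coe_subset, hT], hT ▸ hb, ?_⟩
  rw [← finrank_span_image_eq_card (hT ▸ hb), hT,
    le_antisymm (span_mono (Set.image_mono hbS)) (span_le.mpr hspan)]

section LayerCake

-- Below the least element of `C`, the next smaller value is taken to be `0`.
noncomputable def gapBelow (C : Finset ℝ) (c : ℝ) : ℝ :=
  c - ({x ∈ C | x < c}.max).unbotD 0

lemma gapBelow_pos {C : Finset ℝ} {c : ℝ} (hc : 0 < c) : 0 < gapBelow C c := by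
  rw [gapBelow, sub_pos]
  rcases {x ∈ C | x < c}.eq_empty_or_nonempty with h | h
  · simpa [h] using hc
  · rw [← coe_max' h, WithBot.unbotD_coe]
    exact (mem_filter.mp (max'_mem _ h)).2

lemma sum_gapBelow_filter_le {C : Finset ℝ} {a : ℝ} (ha : a ∈ C) :
    ∑ c ∈ C with c ≤ a, gapBelow C c = a := by
  induction C using Finset.induction_on_max generalizing a with
  | empty => simp at ha
  | insert m C hlt ih =>
    have hgap : ∀ c ∈ C, gapBelow (insert m C) c = gapBelow C c := fun c hc => by
      simp [gapBelow, filter_insert, (hlt c hc).not_gt]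
    have hmC : m ∉ C := fun h => (hlt m h).false
    rcases mem_insert.mp ha with rfl | ha
    · rw [filter_true_of_mem fun c hc => (mem_insert.mp hc).elim le_of_eq fun h => (hlt c h).le,
        sum_insert hmC, sum_congr rfl hgap]
      have hbelow : {x ∈ insert a C | x < a} = C := by
        rw [filter_insert, if_neg (lt_irrefl a), filter_true_of_mem hlt]
      rcases C.eq_empty_or_nonempty with rfl | hne
      · rw [gapBelow, hbelow]
        simp
      · have hsum := ih (C.max'_mem hne)
        rw [filter_true_of_mem fun c hc => C.le_max' c hc] at hsum
        rw [hsum, gapBelow, hbelow, ← coe_max' hne, WithBot.unbotD_coe, sub_add_cancel]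
    · rw [filter_insert, if_neg (hlt a ha).not_ge,
        sum_congr rfl fun c hc => hgap c (mem_filter.mp hc).1, ih ha]

lemma sum_mul_eq_sum_gapBelow_mul_sum_filter_le {ι : Type*} (s : Finset ι) (w y : ι → ℝ) :
    ∑ i ∈ s, w i * y i =
      ∑ c ∈ s.image w, gapBelow (s.image w) c * ∑ i ∈ s with c ≤ w i, y i := by
  simp_rw [mul_sum, sum_filter]
  rw [sum_comm]
  refine sum_congr rfl fun i hi => ?_
  rw [← sum_filter, ← sum_mul, sum_gapBelow_filter_le (mem_image_of_mem w hi)]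

lemma sum_mul_eq_sum_mul_sum_filter_eq {ι : Type*} (s : Finset ι) (w y : ι → ℝ) :
    ∑ i ∈ s, w i * y i = ∑ c ∈ s.image w, c * ∑ i ∈ s with w i = c, y i := by
  rw [← sum_fiberwise_of_maps_to fun i hi => mem_image_of_mem w hi]
  refine sum_congr rfl fun c _ => ?_
  rw [mul_sum]
  exact sum_congr rfl fun i hi => by rw [(mem_filter.mp hi).2]

end LayerCake

section IncidenceVectors

variable {V : Type*} [DecidableEq V]

-- A loop `s(v, v)` is sent to `single v 1 + single v 1 = 0`.
def incVec : Sym2 V → V → ZMod 2 :=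
  Sym2.lift ⟨fun u v => Pi.single u 1 + Pi.single v 1, fun _ _ => add_comm _ _⟩

@[simp]
lemma incVec_mk (u v : V) : incVec s(u, v) = Pi.single u 1 + Pi.single v 1 := rfl

lemma sum_incVec_edges {G : SimpleGraph V} {u v : V} (p : G.Walk u v) :
    (p.edges.map incVec).sum = Pi.single u 1 + Pi.single v 1 := by
  induction p with
  | nil => simp [ZModModule.add_self]
  | @cons a b c _ p ih =>
    rw [Walk.edges_cons, List.map_cons, List.sum_cons, ih, incVec_mk, add_assoc,
      ← add_assoc (Pi.single b 1), ZModModule.add_self, zero_add]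

lemma isAcyclic_fromEdgeSet_of_linearIndepOn {S : Set (Sym2 V)}
    (hS : LinearIndepOn (ZMod 2) incVec S) : (fromEdgeSet S).IsAcyclic := by
  intro v c hc
  have hsub : (c.edges.toFinset : Set (Sym2 V)) ⊆ S := fun e he =>
    ((edgeSet_fromEdgeSet S ▸ c.edges_subset_edgeSet (List.mem_toFinset.mp he))).1
  have hsum : ∑ e ∈ c.edges.toFinset, (1 : ZMod 2) • incVec e = 0 := by
    simp only [one_smul]
    rw [List.sum_toFinset _ hc.edges_nodup, sum_incVec_edges, ZModModule.add_self]
  obtain ⟨e, he⟩ : c.edges.toFinset.Nonempty := by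
    rw [List.toFinset_nonempty_iff, ← List.length_pos_iff, Walk.length_edges]
    exact hc.three_le_length.trans_lt' three_pos
  exact one_ne_zero (linearIndepOn_finset_iff.mp (hS.mono hsub) _ hsum e he)

lemma incVec_notMem_span_of_not_reachable [Fintype V] {S : Set (Sym2 V)} {u v : V}
    (h : ¬ (fromEdgeSet S).Reachable u v) :
    incVec s(u, v) ∉ span (ZMod 2) (incVec '' S) := by
  set R := (fromEdgeSet S).Reachable u
  -- the cut functional of the component of `u` vanishes on every edge of `S`
  let L : (V → ZMod 2) →ₗ[ZMod 2] ZMod 2 := ∑ w ∈ univ.filter R, LinearMap.proj w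
  have hL (a : V) : L (Pi.single a 1) = if R a then 1 else 0 := by
    simp [L, Pi.single_apply]
  have hker : span (ZMod 2) (incVec '' S) ≤ LinearMap.ker L := by
    refine span_le.mpr ?_
    rintro _ ⟨e, he, rfl⟩
    induction e using Sym2.ind with | _ a b =>
    have hab : (fromEdgeSet S).Reachable a b := by
      by_cases hab : a = b
      · exact hab ▸ .refl a
      · exact ((fromEdgeSet_adj _).mpr ⟨he, hab⟩).reachable
    have hR : R a ↔ R b := ⟨fun h => h.trans hab, fun h => h.trans hab.symm⟩
    simp only [SetLike.mem_coe, LinearMap.mem_ker, incVec_mk, map_add, hL, hR,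
      ZModModule.add_self]
  intro hmem
  simpa [hL, R, h] using hker hmem

lemma linearIndepOn_of_isAcyclic_fromEdgeSet [Fintype V] {S : Finset (Sym2 V)}
    (hS : ∀ e ∈ S, ¬ e.IsDiag) (hac : (fromEdgeSet (S : Set (Sym2 V))).IsAcyclic) :
    LinearIndepOn (ZMod 2) incVec (S : Set (Sym2 V)) := by
  induction S using Finset.induction_on with
  | empty => simp
  | @insert e S heS ih =>
    induction e using Sym2.ind with | _ u v =>
    have huv : u ≠ v := fun h => hS _ (mem_insert_self _ _) (Sym2.mk_isDiag_iff.mpr h)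
    rw [coe_insert, Set.insert_eq, fromEdgeSet_union, sup_comm, ← edge,
      isAcyclic_sup_fromEdgeSet_iff] at hac
    have hnr : ¬ (fromEdgeSet (S : Set (Sym2 V))).Reachable u v := fun hr => by
      rcases hac.2 hr with h | h
      · exact huv h
      · exact heS ((fromEdgeSet_adj _).mp h).1
    rw [coe_insert, linearIndepOn_insert (by simpa using heS)]
    exact ⟨ih (fun e he => hS e (mem_insert_of_mem he)) hac.1,
      incVec_notMem_span_of_not_reachable hnr⟩

end IncidenceVectors

section GraphicRank

variable {V : Type*} [Fintype V] [DecidableEq V]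

lemma card_le_graphicRank {T S : Finset (Sym2 V)} (hTS : T ⊆ S)
    (hT : (fromEdgeSet (T : Set (Sym2 V))).IsAcyclic) : T.card ≤ graphicRank S :=
  le_sup (mem_filter.mpr ⟨mem_powerset.mpr hTS, hT⟩)

lemma graphicRank_eq_finrank_span {S : Finset (Sym2 V)} (hS : ∀ e ∈ S, ¬ e.IsDiag) :
    graphicRank S = Module.finrank (ZMod 2) (span (ZMod 2) (incVec '' (S : Set (Sym2 V)))) := by
  refine le_antisymm (Finset.sup_le fun T hT => ?_) ?_
  · obtain ⟨hTS, hT⟩ := mem_filter.mp hT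
    rw [mem_powerset] at hTS
    rw [← finrank_span_image_eq_card
      (linearIndepOn_of_isAcyclic_fromEdgeSet (fun e he => hS e (hTS he)) hT)]
    exact Submodule.finrank_mono (span_mono (Set.image_mono (coe_subset.mpr hTS)))
  · obtain ⟨T, -, hTS, hT, hcard⟩ :=
      exists_linearIndepOn_finset_extension (K := ZMod 2) (v := incVec) (by simp) (empty_subset S)
    exact hcard ▸ card_le_graphicRank hTS (isAcyclic_fromEdgeSet_of_linearIndepOn hT)

lemma graphicRank_empty : graphicRank (∅ : Finset (Sym2 V)) = 0 := by
  simp [graphicRank_eq_finrank_span]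

lemma exists_isAcyclic_superset_card_eq_graphicRank {I S : Finset (Sym2 V)}
    (hS : ∀ e ∈ S, ¬ e.IsDiag) (hIS : I ⊆ S) (hI : (fromEdgeSet (I : Set (Sym2 V))).IsAcyclic) :
    ∃ T : Finset (Sym2 V), I ⊆ T ∧ T ⊆ S ∧ (fromEdgeSet (T : Set (Sym2 V))).IsAcyclic ∧
      T.card = graphicRank S := by
  obtain ⟨T, hIT, hTS, hT, hcard⟩ := exists_linearIndepOn_finset_extension
    (linearIndepOn_of_isAcyclic_fromEdgeSet (fun e he => hS e (hIS he)) hI) hIS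
  exact ⟨T, hIT, hTS, isAcyclic_fromEdgeSet_of_linearIndepOn hT,
    hcard.trans (graphicRank_eq_finrank_span hS).symm⟩

lemma graphicRank_union_add_graphicRank_inter_le {A B : Finset (Sym2 V)}
    (hA : ∀ e ∈ A, ¬ e.IsDiag) (hB : ∀ e ∈ B, ¬ e.IsDiag) :
    graphicRank (A ∪ B) + graphicRank (A ∩ B) ≤ graphicRank A + graphicRank B := by
  have hAB : ∀ e ∈ A ∪ B, ¬ e.IsDiag := fun e he => (mem_union.mp he).elim (hA e) (hB e)
  have hAiB : ∀ e ∈ A ∩ B, ¬ e.IsDiag := fun e he => hA e (mem_inter.mp he).1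
  rw [graphicRank_eq_finrank_span hA, graphicRank_eq_finrank_span hB,
    graphicRank_eq_finrank_span hAB, graphicRank_eq_finrank_span hAiB,
    coe_union, Set.image_union, span_union,
    ← Submodule.finrank_sup_add_finrank_inf_eq (span (ZMod 2) (incVec '' (A : Set (Sym2 V))))]
  refine Nat.add_le_add_left (Submodule.finrank_mono (le_inf ?_ ?_)) _ <;>
    exact span_mono (Set.image_mono (coe_subset.mpr (by simp)))

lemma card_inter_le_graphicRank {T : Finset (Sym2 V)}
    (hT : (fromEdgeSet (T : Set (Sym2 V))).IsAcyclic) (X : Finset (Sym2 V)) :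
    (T ∩ X).card ≤ graphicRank X :=
  card_le_graphicRank inter_subset_right (hT.anti (fromEdgeSet_mono (by simp)))

lemma exists_isAcyclic_card_inter_eq_graphicRank_of_isChain {𝒞 : Finset (Finset (Sym2 V))}
    (h𝒞 : IsChain (· ⊆ ·) (𝒞 : Set (Finset (Sym2 V)))) {S : Finset (Sym2 V)}
    (hS : ∀ e ∈ S, ¬ e.IsDiag) (h𝒞S : ∀ A ∈ 𝒞, A ⊆ S) :
    ∃ T ⊆ S, (fromEdgeSet (T : Set (Sym2 V))).IsAcyclic ∧ T.card = graphicRank S ∧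
      ∀ A ∈ 𝒞, (T ∩ A).card = graphicRank A := by
  induction 𝒞 using Finset.strongInduction generalizing S with | H 𝒞 ih =>
  rcases 𝒞.eq_empty_or_nonempty with rfl | h𝒞ne
  · obtain ⟨T, -, hTS, hT, hcard⟩ :=
      exists_isAcyclic_superset_card_eq_graphicRank hS (empty_subset S) (by simp)
    exact ⟨T, hTS, hT, hcard, by simp⟩
  obtain ⟨A, hA, hmax⟩ := exists_max_image 𝒞 card h𝒞ne
  have hBA : ∀ B ∈ 𝒞, B ⊆ A := fun B hB =>
    (h𝒞.total hA hB).elim (fun hAB => (eq_of_subset_of_card_le hAB (hmax B hB)).ge) id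
  obtain ⟨T', hT'A, hT', hT'card, hT'𝒞⟩ := ih (𝒞.erase A) (erase_ssubset hA)
    (h𝒞.mono (by simp)) (fun e he => hS e (h𝒞S A hA he)) (fun B hB => hBA B (mem_of_mem_erase hB))
  obtain ⟨T, hT'T, hTS, hT, hTcard⟩ :=
    exists_isAcyclic_superset_card_eq_graphicRank hS (hT'A.trans (h𝒞S A hA)) hT'
  refine ⟨T, hTS, hT, hTcard, fun B hB => le_antisymm (card_inter_le_graphicRank hT B) ?_⟩
  have hT'B : (T' ∩ B).card = graphicRank B := by
    by_cases hBA' : B = A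
    · rwa [hBA', inter_eq_left.mpr hT'A]
    · exact hT'𝒞 B (mem_erase.mpr ⟨hBA', hB⟩)
  exact hT'B ▸ card_le_card (inter_subset_inter_right hT'T)

end GraphicRank

section SpanningTreePolytope

variable {V : Type*} [Fintype V] [DecidableEq V] {G : SimpleGraph V} [DecidableRel G.Adj]

lemma memSpanningTreePolytope_indicator {T : Finset (Sym2 V)} (hTE : T ⊆ G.edgeFinset)
    (hT : (fromEdgeSet (T : Set (Sym2 V))).IsAcyclic) (hcard : T.card = graphicRank G.edgeFinset) :
    memSpanningTreePolytope G (fun e => if e ∈ T then 1 else 0) := by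
  have hsum (S : Finset (Sym2 V)) : ∑ e ∈ S, (if e ∈ T then 1 else 0 : ℝ) = (T ∩ S).card := by
    rw [sum_boole, filter_mem_eq_inter, inter_comm]
  refine ⟨fun e => by positivity, fun e he => if_neg fun h => he (hTE h),
    fun S _ => ?_, ?_⟩
  · rw [hsum]
    exact_mod_cast card_inter_le_graphicRank hT S
  · rw [hsum, inter_eq_left.mpr hTE, hcard]

lemma sum_filter_le_eq_graphicRank_of_forall_le {x w : Sym2 V → ℝ}
    (hx : memSpanningTreePolytope G x) (hw : ∀ e ∈ G.edgeFinset, 0 < w e)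
    (hmax : ∀ y, memSpanningTreePolytope G y →
      ∑ e ∈ G.edgeFinset, w e * y e ≤ ∑ e ∈ G.edgeFinset, w e * x e)
    {c : ℝ} (hc : c ∈ G.edgeFinset.image w) :
    ∑ e ∈ G.edgeFinset with c ≤ w e, x e = graphicRank {e ∈ G.edgeFinset | c ≤ w e} := by
  set E := G.edgeFinset
  set C := E.image w
  set A : ℝ → Finset (Sym2 V) := fun c => {e ∈ E | c ≤ w e}
  have hA : Antitone A := fun c c' hcc' => monotone_filter_right E fun _ _ h => hcc'.trans h
  obtain ⟨T, hTE, hT, hTcard, hTA⟩ := exists_isAcyclic_card_inter_eq_graphicRank_of_isChain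
    (𝒞 := C.image A) (hA.isChain_range.mono (by simp))
    (fun e he => G.not_isDiag_of_mem_edgeFinset he) (by simp [A, E])
  have hle := hmax _ (memSpanningTreePolytope_indicator hTE hT hTcard)
  rw [sum_mul_eq_sum_gapBelow_mul_sum_filter_le E w,
    sum_mul_eq_sum_gapBelow_mul_sum_filter_le E w x] at hle
  have hTc : ∀ c ∈ C, ∑ e ∈ A c, (if e ∈ T then 1 else 0 : ℝ) = graphicRank (A c) := by
    intro c hc
    rw [sum_boole, filter_mem_eq_inter, inter_comm, hTA _ (mem_image_of_mem A hc)]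
  have hxc : ∀ c, ∑ e ∈ A c, x e ≤ graphicRank (A c) := fun c => hx.2.2.1 _ (filter_subset _ _)
  have hgap : ∀ c ∈ C, 0 < gapBelow C c := fun c hc => by
    obtain ⟨e, he, rfl⟩ := mem_image.mp hc
    exact gapBelow_pos (hw e he)
  refine (hxc c).antisymm (not_lt.mp fun hlt => hle.not_gt ?_)
  refine sum_lt_sum (fun c' hc' => ?_) ⟨c, hc, ?_⟩
  · rw [hTc c' hc']
    exact mul_le_mul_of_nonneg_left (hxc c') (hgap c' hc').le
  · rw [hTc c hc]
    exact mul_lt_mul_of_pos_left hlt (hgap c hc)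

variable {x : Sym2 V → ℝ}

lemma sum_mul_eq_of_forall_sum_filter_eq_graphicRank (hx : memSpanningTreePolytope G x)
    (htight : ∀ c : ℝ, ∑ e ∈ G.edgeFinset with x e = c, x e
      = graphicRank {e ∈ G.edgeFinset | x e = c})
    {y : Sym2 V → ℝ} (hy : memSpanningTreePolytope G y) :
    ∑ e ∈ G.edgeFinset, x e * y e = ∑ e ∈ G.edgeFinset, x e * x e := by
  have hlevel : ∀ c ∈ G.edgeFinset.image x,
      ∑ e ∈ G.edgeFinset with x e = c, y e = ∑ e ∈ G.edgeFinset with x e = c, x e := by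
    refine (sum_eq_sum_iff_of_le fun c _ => (htight c).symm ▸ hy.2.2.1 _ (filter_subset _ _)).mp ?_
    rw [sum_fiberwise_of_maps_to fun e he => mem_image_of_mem x he,
      sum_fiberwise_of_maps_to fun e he => mem_image_of_mem x he, hy.2.2.2, hx.2.2.2]
  rw [sum_mul_eq_sum_mul_sum_filter_eq _ x y, sum_mul_eq_sum_mul_sum_filter_eq _ x x]
  exact sum_congr rfl fun c hc => by rw [hlevel c hc]

variable (hx : memSpanningTreePolytope G x)
  (hconst : ∀ y, memSpanningTreePolytope G y →
    ∑ e ∈ G.edgeFinset, x e * y e = ∑ e ∈ G.edgeFinset, x e * x e)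
include hx hconst

lemma sum_affine_mul_le_of_forall_sum_mul_eq (a b : ℝ) {y : Sym2 V → ℝ}
    (hy : memSpanningTreePolytope G y) :
    ∑ e ∈ G.edgeFinset, (a + b * x e) * y e ≤ ∑ e ∈ G.edgeFinset, (a + b * x e) * x e := by
  simp only [add_mul, mul_assoc, sum_add_distrib, ← mul_sum]
  rw [hy.2.2.2, hx.2.2.2, hconst y hy]

lemma sum_filter_le_eq_graphicRank_of_forall_sum_mul_eq {c : ℝ} (hc : c ∈ G.edgeFinset.image x) :
    ∑ e ∈ G.edgeFinset with c ≤ x e, x e = graphicRank {e ∈ G.edgeFinset | c ≤ x e} := by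
  have h := sum_filter_le_eq_graphicRank_of_forall_le hx (w := fun e => 1 + 1 * x e)
    (fun e _ => by linarith [hx.1 e])
    (fun y hy => sum_affine_mul_le_of_forall_sum_mul_eq hx hconst 1 1 hy)
    (c := 1 + 1 * c) (by simpa using hc)
  simpa using h

lemma sum_filter_ge_eq_graphicRank_of_forall_sum_mul_eq {c : ℝ} (hc : c ∈ G.edgeFinset.image x) :
    ∑ e ∈ G.edgeFinset with x e ≤ c, x e = graphicRank {e ∈ G.edgeFinset | x e ≤ c} := by
  set M := 1 + ∑ e ∈ G.edgeFinset, x e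
  have h := sum_filter_le_eq_graphicRank_of_forall_le hx (w := fun e => M + -1 * x e)
    (fun e he => by linarith [single_le_sum (fun e _ => hx.1 e) he])
    (fun y hy => sum_affine_mul_le_of_forall_sum_mul_eq hx hconst M (-1) hy)
    (c := M + -1 * c) (by simpa using hc)
  rwa [filter_congr fun e _ => show M + -1 * c ≤ M + -1 * x e ↔ x e ≤ c by
    constructor <;> intro <;> linarith] at h

lemma sum_filter_eq_eq_graphicRank_of_forall_sum_mul_eq (c : ℝ) :
    ∑ e ∈ G.edgeFinset with x e = c, x e = graphicRank {e ∈ G.edgeFinset | x e = c} := by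
  by_cases hc : c ∈ G.edgeFinset.image x
  swap
  · rw [filter_false_of_mem fun e he (hxe : x e = c) => hc (hxe ▸ mem_image_of_mem x he),
      graphicRank_empty]
    simp
  set E := G.edgeFinset
  set A := {e ∈ E | c ≤ x e}
  set B := {e ∈ E | x e ≤ c}
  have hAB : A ∪ B = E := by
    rw [← filter_or, filter_true_of_mem fun e _ => le_total c (x e)]
  have hAiB : A ∩ B = {e ∈ E | x e = c} := by
    rw [← filter_and]
    exact filter_congr fun e _ => ⟨fun h => le_antisymm h.2 h.1, fun h => ⟨h.ge, h.le⟩⟩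
  have hloop : ∀ S ⊆ E, ∀ e ∈ S, ¬ e.IsDiag := fun S hS e he =>
    G.not_isDiag_of_mem_edgeFinset (hS he)
  have hsubmod := graphicRank_union_add_graphicRank_inter_le (hloop A (filter_subset _ _))
    (hloop B (filter_subset _ _))
  rw [hAB, hAiB] at hsubmod
  have hsum := sum_union_inter (s₁ := A) (s₂ := B) (f := x)
  rw [hAB, hAiB] at hsum
  have hA := sum_filter_le_eq_graphicRank_of_forall_sum_mul_eq hx hconst hc
  have hB := sum_filter_ge_eq_graphicRank_of_forall_sum_mul_eq hx hconst hc
  have hle := hx.2.2.1 {e ∈ E | x e = c} (filter_subset _ _)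
  have hsubmod' : (graphicRank E + graphicRank {e ∈ E | x e = c} : ℝ) ≤
    graphicRank A + graphicRank B := by exact_mod_cast hsubmod
  linarith [hx.2.2.2]

end SpanningTreePolytope

theorem spanning_tree_symmetric_nash_iff_general {V : Type*} [Fintype V] [DecidableEq V]
    (G : SimpleGraph V) [DecidableRel G.Adj]
    (x : Sym2 V → ℝ) (hx : memSpanningTreePolytope G x) :
    ((∀ y : Sym2 V → ℝ, memSpanningTreePolytope G y →
        ∑ e ∈ G.edgeFinset, x e * y e ≤ ∑ e ∈ G.edgeFinset, x e * x e) ∧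
     (∀ z : Sym2 V → ℝ, memSpanningTreePolytope G z →
        ∑ e ∈ G.edgeFinset, x e * x e ≤ ∑ e ∈ G.edgeFinset, z e * x e)) ↔
    (∀ c : ℝ, ∑ e ∈ G.edgeFinset.filter (fun e => x e = c), x e
        = (graphicRank (G.edgeFinset.filter (fun e => x e = c)) : ℝ)) := by
  constructor
  · rintro ⟨hbest, hworst⟩
    refine sum_filter_eq_eq_graphicRank_of_forall_sum_mul_eq hx fun y hy =>
      (hbest y hy).antisymm ?_
    simpa only [mul_comm (y _)] using hworst y hy
  · intro htight
    have hconst := fun y (hy : memSpanningTreePolytope G y) =>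
      sum_mul_eq_of_forall_sum_filter_eq_graphicRank hx htight hy
    refine ⟨fun y hy => (hconst y hy).le, fun z hz => ?_⟩
    simpa only [mul_comm (z _)] using (hconst z hz).ge

/-- in the spanning tree game on a connected graph `G` with identity loss
matrix, a point `x` of the spanning tree polytope yields a symmetric Nash equilibrium
`(x,x)` if and only if for every level set `P_c = {e : x(e) = c}` of `x` one has
`x(P_c) = r(P_c)` (equivalently, `x` is constant on each block of `G` and every block
is uniformly dense). -/
theorem spanning_tree_symmetric_nash_iff {V : Type*} [Fintype V] [DecidableEq V]
    (G : SimpleGraph V) [DecidableRel G.Adj] (hG : G.Connected)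
    (x : Sym2 V → ℝ) (hx : memSpanningTreePolytope G x) :
    ((∀ y : Sym2 V → ℝ, memSpanningTreePolytope G y →
        ∑ e ∈ G.edgeFinset, x e * y e ≤ ∑ e ∈ G.edgeFinset, x e * x e) ∧
     (∀ z : Sym2 V → ℝ, memSpanningTreePolytope G z →
        ∑ e ∈ G.edgeFinset, x e * x e ≤ ∑ e ∈ G.edgeFinset, z e * x e)) ↔
    (∀ c : ℝ, ∑ e ∈ G.edgeFinset.filter (fun e => x e = c), x e
        = (graphicRank (G.edgeFinset.filter (fun e => x e = c)) : ℝ)) :=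
  spanning_tree_symmetric_nash_iff_general G x hx
end

section
/- Let f be a cardinality-based submodular function f(S) = g(|S|), g concave, and let x ∈ P(f) with maximal tight set T(x). If e ∈ E \ T(x) and δ > 0 are such that x + δχ_{\{e\}} ∈ P(f), then (x + δχ_{\{e\}})(e) ≤ min_{e' ∈ T(x)} x(e') whenever T(x) is nonempty; more precisely, for any direction z ≥ 0 supported on E \ T(x), and λ* = max{λ : x + λz ∈ P(f)}, every coordinate of x + λ* z on E \ T(x) is at most min_{e' ∈ T(x)} x(e'). -/
open Finset

/-- Exchanging `e'` for `e` in `T` keeps the cardinality, so `y(e) + y(T) - y(e') ≤ g(|T|) = y(T)`. -/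
theorem le_of_mem_tight_of_notMem {α : Type*} (g : ℕ → ℝ) (y : α → ℝ)
    (hy : ∀ S : Finset α, ∑ a ∈ S, y a ≤ g #S) {T : Finset α} (hT : ∑ a ∈ T, y a = g #T)
    {e e' : α} (he : e ∉ T) (he' : e' ∈ T) : y e ≤ y e' := by
  classical
  have hnot : e ∉ T.erase e' := fun h ↦ he (mem_of_mem_erase h)
  have hswap := hy (insert e (T.erase e'))
  rw [sum_insert hnot, card_insert_of_notMem hnot, card_erase_add_one he', sum_erase_eq_sub he',
    hT] at hswap
  linarith

theorem line_increase_bounded_by_min_tight_general {α : Type*} (g : ℕ → ℝ) (x : α → ℝ) (T : Finset α)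
    (hTtight : ∑ e ∈ T, x e = g T.card)
    (z : α → ℝ) (hzsupp : ∀ e ∈ T, z e = 0)
    (lamstar : ℝ) (hmem : ∀ S : Finset α, ∑ e ∈ S, (x e + lamstar * z e) ≤ g S.card) :
    ∀ e ∉ T, ∀ e' ∈ T, x e + lamstar * z e ≤ x e' := by
  intro e he e' he'
  have hagree : ∀ a ∈ T, x a + lamstar * z a = x a := fun a ha ↦ by simp [hzsupp a ha]
  have htight : ∑ a ∈ T, (x a + lamstar * z a) = g #T := by rw [sum_congr rfl hagree, hTtight]
  simpa [hagree e' he'] using le_of_mem_tight_of_notMem g _ hmem htight he he'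

/-- let `f(S) = g(|S|)` be cardinality-based submodular, `x ∈ P(f)` with
nonempty maximal tight set `T`, and `z ≥ 0` a direction supported on `E \ T`. If
`λ* = max{λ : x + λz ∈ P(f)}`, then every coordinate of `x + λ*z` outside `T` is at most
`min_{e' ∈ T} x(e')`. -/
theorem line_increase_bounded_by_min_tight {α : Type*} [Fintype α] [DecidableEq α]
    (g : ℕ → ℝ) (hg0 : g 0 = 0)
    (hgconc : ∀ k : ℕ, g (k + 2) + g k ≤ 2 * g (k + 1))
    (x : α → ℝ) (hx0 : ∀ e, 0 ≤ x e)
    (hxP : ∀ S : Finset α, ∑ e ∈ S, x e ≤ g S.card)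
    (T : Finset α) (hTne : T.Nonempty)
    (hTtight : ∑ e ∈ T, x e = g T.card)
    (hTmax : ∀ S : Finset α, ∑ e ∈ S, x e = g S.card → S ⊆ T)
    (z : α → ℝ) (hz0 : ∀ e, 0 ≤ z e) (hzsupp : ∀ e ∈ T, z e = 0)
    (lamstar : ℝ)
    (hmemnn : ∀ e, 0 ≤ x e + lamstar * z e)
    (hmem : ∀ S : Finset α, ∑ e ∈ S, (x e + lamstar * z e) ≤ g S.card)
    (hmax : ∀ lam : ℝ, (∀ e, 0 ≤ x e + lam * z e) →
      (∀ S : Finset α, ∑ e ∈ S, (x e + lam * z e) ≤ g S.card) → lam ≤ lamstar) :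
    ∀ e ∉ T, ∀ e' ∈ T, x e + lamstar * z e ≤ x e' :=
  line_increase_bounded_by_min_tight_general g x T hTtight z hzsupp lamstar hmem
end

section
/- Let f be a monotone normalized submodular function, w ∈ ℝ^E a positive weight vector, and x ∈ B(f). Define c(e) = x(e)/w(e), let c₁ < ... < c_p be the distinct values of c, and S_i = {e : c(e) ≤ c_i}. If x(S_i) = f(S_i) for all i = 1,...,p, then for a diagonal loss matrix L with L_{e,e} = 1/w(e) > 0 (and zero elsewhere), all points z ∈ B(f) satisfy z^T L x ≥ x^T L x, i.e., x minimizes z ↦ z^T L x over B(f). -/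
open Finset

/-
With `g = x / w`, every sublevel set `{g ≤ g a}` is one of the tight sets `Sᵢ`, so there
`x(S) = f(S) ≥ z(S)`, while `x(E) = f(E) = z(E)`. Summing by parts, `∑ₑ y(e) g(e)` equals
`max g · y(E)` minus a nonnegative combination of the sums `y(S)` over the sublevel sets `S` of `g`;
hence it is smaller for `y = x` than for `y = z`.
-/

section SummationByParts

variable {α : Type*}

theorem sum_mul_sub_nonneg_of_sublevel_sum_nonneg (g d : α → ℝ) (s : Finset α)
    (hlevel : ∀ a ∈ s, 0 ≤ ∑ e ∈ s with g e ≤ g a, d e) (m : ℝ) (hm : ∀ e ∈ s, g e ≤ m) :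
    0 ≤ ∑ e ∈ s, d e * (m - g e) := by
  induction s using Finset.strongInduction generalizing m with
  | H s ih =>
  rcases s.eq_empty_or_nonempty with rfl | hs
  · simp
  obtain ⟨a, ha, hmax⟩ := s.exists_max_image g hs
  set t := {e ∈ s | g e < g a}
  have hts : t ⊂ s := filter_ssubset.2 ⟨a, ha, lt_irrefl _⟩
  have htot : 0 ≤ ∑ e ∈ s, d e := by
    simpa [filter_true_of_mem hmax] using hlevel a ha
  -- The weights `g a - g` vanish on the top level set of `g`, which leaves `t` with `m = g a`.
  have hlower : 0 ≤ ∑ e ∈ t, d e * (g a - g e) := by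
    refine ih t hts (fun b hb => ?_) (g a) (fun e he => (mem_filter.1 he).2.le)
    have hb' := mem_filter.1 hb
    have hsame : {e ∈ t | g e ≤ g b} = {e ∈ s | g e ≤ g b} := by
      rw [filter_filter]
      exact filter_congr fun e _ => ⟨And.right, fun h => ⟨h.trans_lt hb'.2, h⟩⟩
    exact hsame ▸ hlevel b hb'.1
  have hsplit : ∑ e ∈ s, d e * (g a - g e) = ∑ e ∈ t, d e * (g a - g e) := by
    refine (sum_filter_of_ne fun e he hne => ?_).symm
    have : g e ≠ g a := fun h => hne (by rw [h, sub_self, mul_zero])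
    exact lt_of_le_of_ne (hmax e he) this
  calc (0 : ℝ) ≤ (m - g a) * ∑ e ∈ s, d e + ∑ e ∈ t, d e * (g a - g e) :=
        add_nonneg (mul_nonneg (sub_nonneg.2 (hm a ha)) htot) hlower
    _ = ∑ e ∈ s, d e * (m - g e) := by
        rw [← hsplit, mul_sum, ← sum_add_distrib]
        exact sum_congr rfl fun e _ => by ring

theorem sum_mul_le_sum_mul_of_sublevel_sum_le [Fintype α] (g y z : α → ℝ)
    (hlevel : ∀ a, ∑ e ∈ univ with g e ≤ g a, z e ≤ ∑ e ∈ univ with g e ≤ g a, y e)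
    (htot : ∑ e, y e = ∑ e, z e) :
    ∑ e, y e * g e ≤ ∑ e, z e * g e := by
  obtain ⟨m, hm⟩ := (Set.finite_range g).bddAbove
  have key := sum_mul_sub_nonneg_of_sublevel_sum_nonneg g (y - z) univ
    (fun a _ => by simpa [sum_sub_distrib] using hlevel a) m
    (fun e _ => hm (Set.mem_range_self e))
  have hexpand : ∑ e, (y - z) e * (m - g e)
      = (∑ e, y e - ∑ e, z e) * m - (∑ e, y e * g e - ∑ e, z e * g e) := by
    simp only [Pi.sub_apply, mul_sub, sub_mul, sum_sub_distrib, sum_mul]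
  rw [hexpand, htot, sub_self, zero_mul] at key
  linarith

end SummationByParts

theorem lex_opt_minimizes_linear_general {α : Type*} [Fintype α]
    (f : Finset α → ℝ)
    (w : α → ℝ)
    (x : α → ℝ) (hx : memBasePoly f x)
    (p : ℕ) (c : Fin p → ℝ)
    (hcov : ∀ e : α, ∃ i : Fin p, x e / w e = c i)
    (htight : ∀ i : Fin p,
      ∑ e ∈ univ.filter (fun e => x e / w e ≤ c i), x e
        = f (univ.filter (fun e => x e / w e ≤ c i))) :
    ∀ z : α → ℝ, memBasePoly f z →
      ∑ e, x e * (x e / w e) ≤ ∑ e, z e * (x e / w e) := by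
  intro z hz
  refine sum_mul_le_sum_mul_of_sublevel_sum_le (fun e => x e / w e) x z (fun a => ?_)
    (hx.2.2.trans hz.2.2.symm)
  obtain ⟨i, hi⟩ := hcov a
  rw [hi, htight i]
  exact hz.2.1 _

/-- lexicographic optimality yields symmetric Nash equilibria: let
`w > 0`, `x ∈ B(f)`, `c(e) = x(e)/w(e)` with distinct values `c₁ < … < c_p`, and
`Sᵢ = {e : c(e) ≤ cᵢ}`. If `x(Sᵢ) = f(Sᵢ)` for all `i`, then for the diagonal loss
matrix `L` with `L_{e,e} = 1/w(e)`, the point `x` minimizes `z ↦ zᵀLx` over `B(f)`: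
`∑ₑ z(e)·x(e)/w(e) ≥ ∑ₑ x(e)·x(e)/w(e)` for all `z ∈ B(f)`. -/
theorem lex_opt_minimizes_linear {α : Type*} [Fintype α] [DecidableEq α]
    (f : Finset α → ℝ)
    (hsub : ∀ A B : Finset α, f (A ∪ B) + f (A ∩ B) ≤ f A + f B)
    (hmono : ∀ ⦃A B : Finset α⦄, A ⊆ B → f A ≤ f B)
    (hnorm : f ∅ = 0)
    (w : α → ℝ) (hw : ∀ e, 0 < w e)
    (x : α → ℝ) (hx : memBasePoly f x)
    (p : ℕ) (c : Fin p → ℝ) (hc : StrictMono c)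
    (hcov : ∀ e : α, ∃ i : Fin p, x e / w e = c i)
    (htight : ∀ i : Fin p,
      ∑ e ∈ univ.filter (fun e => x e / w e ≤ c i), x e
        = f (univ.filter (fun e => x e / w e ≤ c i))) :
    ∀ z : α → ℝ, memBasePoly f z →
      ∑ e, x e * (x e / w e) ≤ ∑ e, z e * (x e / w e) :=
  lex_opt_minimizes_linear_general f w x hx p c hcov htight
end
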